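/- arXiv:2302.06903 — 7 statements merged into one kernel-verified Lean document; each statement's English description precedes it below -/
import Mathlib

section
/- Let Λ : [0,∞) → [0,∞) be a C² Young function with λ := Λ' and suppose 0 < i_λ := inf_{t>0} t·λ'(t)/λ(t) and s_λ := sup_{t>0} t·λ'(t)/λ(t) < ∞. Then i_λ + 1 ≤ inf_{t>0} t·Λ'(t)/Λ(t) ≤ sup_{t>0} t·Λ'(t)/Λ(t) ≤ s_λ + 1. -/
/-- If `Λ` is a `C²` Young function whose derivative `λ = Λ'` has indices
`0 < i_λ ≤ s_λ < ∞`, then the indices of `Λ` satisfy `i_λ + 1 ≤ i_Λ ≤ s_Λ ≤ s_λ + 1`,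
stated pointwise: `i_λ + 1 ≤ t Λ'(t)/Λ(t) ≤ s_λ + 1` for all `t > 0`. -/
theorem young_index_of_derivative_index (Λ : ℝ → ℝ) (iil ssl : ℝ)
    (hC2 : ContDiff ℝ 2 Λ)
    (hconv : ConvexOn ℝ (Set.Ici 0) Λ)
    (hΛ0 : Λ 0 = 0) (hΛpos : ∀ t > 0, 0 < Λ t)
    (hderpos : ∀ t > 0, 0 < deriv Λ t)
    (hlim0 : Filter.Tendsto (fun t => Λ t / t) (nhdsWithin 0 (Set.Ioi 0)) (nhds 0))
    (hlimtop : Filter.Tendsto (fun t => Λ t / t) Filter.atTop Filter.atTop)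
    (hiil : 0 < iil)
    (hlow : ∀ t > 0, iil ≤ t * deriv (deriv Λ) t / deriv Λ t)
    (hhigh : ∀ t > 0, t * deriv (deriv Λ) t / deriv Λ t ≤ ssl) :
    ∀ t > 0, iil + 1 ≤ t * deriv Λ t / Λ t ∧ t * deriv Λ t / Λ t ≤ ssl + 1 := by
  have hΛd : Differentiable ℝ Λ := hC2.differentiable (by norm_num)
  have hld : Differentiable ℝ (deriv Λ) := (hC2.iterate_deriv' 1 1).differentiable (by norm_num)
  have hgd : ∀ (a b : ℝ) (s : ℝ),
      HasDerivAt (fun s => a * (s * deriv Λ s) + b * Λ s)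
        (a * (deriv Λ s + s * deriv (deriv Λ) s) + b * deriv Λ s) s := by
    intro a b s
    have h1 : HasDerivAt (fun s => s * deriv Λ s)
        (1 * deriv Λ s + s * deriv (deriv Λ) s) s :=
      (hasDerivAt_id s).mul (hld s).hasDerivAt
    have := (h1.const_mul a).add (((hΛd s).hasDerivAt).const_mul b)
    simp only [one_mul] at this
    exact this
  have mono : ∀ a b : ℝ,
      (∀ s > 0, 0 ≤ a * (deriv Λ s + s * deriv (deriv Λ) s) + b * deriv Λ s) →
      MonotoneOn (fun s => a * (s * deriv Λ s) + b * Λ s) (Set.Ici 0) := by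
    intro a b hc
    apply monotoneOn_of_deriv_nonneg (convex_Ici 0)
    · exact (Differentiable.continuous (fun s => (hgd a b s).differentiableAt)).continuousOn
    · exact fun s _ => ((hgd a b s).differentiableAt).differentiableWithinAt
    · intro s hs
      rw [interior_Ici] at hs
      rw [(hgd a b s).deriv]
      exact hc s hs
  intro t ht
  have hΛt := hΛpos t ht
  have hlt := hderpos t ht
  constructor
  · have h := mono 1 (-(iil + 1)) ?_ (Set.self_mem_Ici) (Set.mem_Ici.mpr ht.le) ht.le
    · simp only [hΛ0, mul_zero, zero_mul, one_mul] at h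
      rw [le_div_iff₀ hΛt]
      nlinarith
    · intro s hs
      have hls := hderpos s hs
      have h2 : iil * deriv Λ s ≤ s * deriv (deriv Λ) s := by
        have := hlow s hs
        rw [le_div_iff₀ hls] at this
        linarith
      nlinarith
  · have h := mono (-1) (ssl + 1) ?_ (Set.self_mem_Ici) (Set.mem_Ici.mpr ht.le) ht.le
    · simp only [hΛ0, mul_zero, zero_mul] at h
      rw [div_le_iff₀ hΛt]
      nlinarith
    · intro s hs
      have hls := hderpos s hs
      have h2 : s * deriv (deriv Λ) s ≤ ssl * deriv Λ s := by
        have := hhigh s hs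
        rw [div_le_iff₀ hls] at this
        linarith
      nlinarith
end

section
/- Let Λ and Θ be C² Young functions with positive first derivatives on (0,∞). Set i_λ := inf_{t>0} tΛ''(t)/Λ'(t), s_λ := sup_{t>0} tΛ''(t)/Λ'(t), i_θ := inf_{t>0} tΘ''(t)/Θ'(t), s_θ := sup_{t>0} tΘ''(t)/Θ'(t), and suppose 0 < i_λ ≤ s_λ ≤ i_θ ≤ s_θ < ∞. Then the composition Υ := Θ ∘ Λ⁻¹ is convex on [0,∞). -/
open Set


/-- If `Λ, Θ` are `C²` Young functions with positive first derivatives on `(0,∞)` and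
`0 < i_λ ≤ s_λ ≤ i_θ ≤ s_θ < ∞` (where `i_λ = inf t Λ''/Λ'`, etc.), then
`Υ := Θ ∘ Λ⁻¹` is convex on `[0,∞)`. -/
theorem composition_with_inverse_convex (Λ Θ Λinv : ℝ → ℝ) (iil ssl iith ssth : ℝ)
    (hΛC2 : ContDiff ℝ 2 Λ) (hΘC2 : ContDiff ℝ 2 Θ)
    (hΛ0 : Λ 0 = 0) (hΘ0 : Θ 0 = 0)
    (hΛ' : ∀ t > 0, 0 < deriv Λ t) (hΘ' : ∀ t > 0, 0 < deriv Θ t)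
    (hΛconv : ConvexOn ℝ (Set.Ici 0) Λ) (hΘconv : ConvexOn ℝ (Set.Ici 0) Θ)
    (hinv₁ : ∀ t ≥ 0, Λ (Λinv t) = t) (hinv₂ : ∀ t ≥ 0, Λinv (Λ t) = t)
    (hinvnn : ∀ t ≥ 0, 0 ≤ Λinv t)
    (hiil : 0 < iil)
    (hlowΛ : ∀ t > 0, iil ≤ t * deriv (deriv Λ) t / deriv Λ t)
    (hhighΛ : ∀ t > 0, t * deriv (deriv Λ) t / deriv Λ t ≤ ssl)
    (hlowΘ : ∀ t > 0, iith ≤ t * deriv (deriv Θ) t / deriv Θ t)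
    (hhighΘ : ∀ t > 0, t * deriv (deriv Θ) t / deriv Θ t ≤ ssth)
    (horder₁ : iil ≤ ssl) (horder₂ : ssl ≤ iith) (horder₃ : iith ≤ ssth) :
    ConvexOn ℝ (Set.Ici 0) (Θ ∘ Λinv) := by
  have hΛcont : Continuous Λ := hΛC2.continuous
  have hΘcont : Continuous Θ := hΘC2.continuous
  have hΛC2' : ContDiff ℝ ((1:ℕ∞)+1) Λ := by exact_mod_cast hΛC2
  have hΘC2' : ContDiff ℝ ((1:ℕ∞)+1) Θ := by exact_mod_cast hΘC2
  have hΛdiff : Differentiable ℝ Λ := hΛC2.differentiable two_ne_zero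
  have hΘdiff : Differentiable ℝ Θ := hΘC2.differentiable two_ne_zero
  have hΛ'diff : Differentiable ℝ (deriv Λ) :=
    ((contDiff_succ_iff_deriv).mp hΛC2').2.2.differentiable (by simp)
  have hΘ'diff : Differentiable ℝ (deriv Θ) :=
    ((contDiff_succ_iff_deriv).mp hΘC2').2.2.differentiable (by simp)
  have hΛsm : StrictMonoOn Λ (Set.Ici 0) := by
    apply strictMonoOn_of_deriv_pos (convex_Ici 0) hΛcont.continuousOn
    intro x hx; rw [interior_Ici] at hx; exact hΛ' x hx
  set g : ℝ → ℝ := fun t => deriv Θ t / deriv Λ t with hgdef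
  have hgmono : MonotoneOn g (Set.Ioi 0) := by
    apply monotoneOn_of_deriv_nonneg (convex_Ioi 0)
    · exact ContinuousOn.div (hΘ'diff.continuous.continuousOn)
        (hΛ'diff.continuous.continuousOn) (fun t ht => (hΛ' t ht).ne')
    · rw [interior_Ioi]
      intro t ht
      exact ((hΘ'diff t).div (hΛ'diff t) (hΛ' t ht).ne').differentiableWithinAt
    · rw [interior_Ioi]
      intro t ht
      have hL : 0 < deriv Λ t := hΛ' t ht
      have hT : 0 < deriv Θ t := hΘ' t ht
      rw [hgdef, deriv_fun_div (hΘ'diff t) (hΛ'diff t) hL.ne']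
      have key : deriv Θ t * deriv (deriv Λ) t ≤ deriv (deriv Θ) t * deriv Λ t := by
        have h1 : t * deriv (deriv Λ) t / deriv Λ t ≤ t * deriv (deriv Θ) t / deriv Θ t :=
          le_trans (hhighΛ t ht) (le_trans horder₂ (hlowΘ t ht))
        rw [div_le_div_iff₀ hL hT] at h1
        have ht' : (0:ℝ) < t := ht
        have h1' : t * (deriv Θ t * deriv (deriv Λ) t) ≤
            t * (deriv (deriv Θ) t * deriv Λ t) := by linear_combination h1
        exact le_of_mul_le_mul_left h1' ht'
      apply div_nonneg (by linarith) (sq_nonneg _)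
  have key : ∀ a b : ℝ, 0 ≤ a → a < b → (Θ b - Θ a) / (Λ b - Λ a) ∈ g '' (Set.Ioo a b) := by
    intro a b ha hab
    obtain ⟨ξ, hξ, h⟩ := exists_ratio_deriv_eq_ratio_slope (f := Θ) (g := Λ) (hab := hab)
      (hfc := hΘcont.continuousOn) (hfd := hΘdiff.differentiableOn)
      (hgc := hΛcont.continuousOn) (hgd := hΛdiff.differentiableOn)
    have hΛab : 0 < Λ b - Λ a :=
      sub_pos.mpr (hΛsm ha (le_trans ha hab.le) hab)
    have hξ0 : 0 < ξ := lt_of_le_of_lt ha hξ.1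
    refine ⟨ξ, hξ, ?_⟩
    rw [hgdef]
    rw [div_eq_div_iff (hΛ' ξ hξ0).ne' hΛab.ne']
    linear_combination h
  apply convexOn_of_slope_mono_adjacent (convex_Ici 0)
  intro x y z hx hz hxy hyz
  have hx0 : (0:ℝ) ≤ x := hx
  have hy0 : (0:ℝ) ≤ y := le_of_lt (lt_of_le_of_lt hx0 hxy)
  have hz0 : (0:ℝ) ≤ z := hz
  have ha0 : 0 ≤ Λinv x := hinvnn x hx0
  have hb0 : 0 ≤ Λinv y := hinvnn y hy0
  have hc0 : 0 ≤ Λinv z := hinvnn z hz0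
  have hmono : ∀ u v : ℝ, 0 ≤ u → 0 ≤ v → u < v → Λinv u < Λinv v := by
    intro u v hu hv huv
    by_contra h
    push_neg at h
    have : Λ (Λinv v) ≤ Λ (Λinv u) := by
      rcases eq_or_lt_of_le h with h' | h'
      · rw [h']
      · exact (hΛsm (hinvnn v hv) (hinvnn u hu) h').le
    rw [hinv₁ u hu, hinv₁ v hv] at this
    linarith
  have hab : Λinv x < Λinv y := hmono x y hx0 hy0 hxy
  have hbc : Λinv y < Λinv z := hmono y z hy0 hz0 hyz
  obtain ⟨ξ₁, hξ₁, he₁⟩ := key (Λinv x) (Λinv y) ha0 hab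
  obtain ⟨ξ₂, hξ₂, he₂⟩ := key (Λinv y) (Λinv z) hb0 hbc
  have hsub1 : y - x = Λ (Λinv y) - Λ (Λinv x) := by rw [hinv₁ x hx0, hinv₁ y hy0]
  have hsub2 : z - y = Λ (Λinv z) - Λ (Λinv y) := by rw [hinv₁ y hy0, hinv₁ z hz0]
  have hg12 : g ξ₁ ≤ g ξ₂ := by
    apply hgmono (lt_of_le_of_lt ha0 hξ₁.1) (lt_of_le_of_lt ha0 (hξ₁.1.trans (hξ₁.2.trans hξ₂.1)))
    exact le_of_lt (hξ₁.2.trans hξ₂.1)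
  calc ((Θ ∘ Λinv) y - (Θ ∘ Λinv) x) / (y - x)
      = (Θ (Λinv y) - Θ (Λinv x)) / (Λ (Λinv y) - Λ (Λinv x)) := by
        rw [hsub1]; rfl
    _ = g ξ₁ := he₁.symm
    _ ≤ g ξ₂ := hg12
    _ = (Θ (Λinv z) - Θ (Λinv y)) / (Λ (Λinv z) - Λ (Λinv y)) := he₂
    _ = ((Θ ∘ Λinv) z - (Θ ∘ Λinv) y) / (z - y) := by
        rw [hsub2]; rfl
end

section
/- Let Λ and Θ be C² Young functions as above with 0 < i_λ ≤ s_λ ≤ i_θ ≤ s_θ < ∞, and additionally s_Λ < i_Θ where i_Λ := inf tΛ'/Λ, s_Λ := sup tΛ'/Λ and similarly for Θ. Then Υ := Θ ∘ Λ⁻¹ is a Young function, and its indices satisfy 1 < i_Θ/s_Λ ≤ i_Υ ≤ s_Υ ≤ s_Θ/i_Λ < ∞. -/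
open Set Filter Real Topology

private lemma deriv_ratio_mono_aux (F G : ℝ → ℝ)
    (hF : Differentiable ℝ F) (hG : Differentiable ℝ G)
    (hGpos : ∀ t > 0, 0 < G t)
    (key : ∀ t > 0, F t * deriv G t ≤ deriv F t * G t) :
    MonotoneOn (fun s => F s / G s) (Set.Ioi 0) := by
  apply monotoneOn_of_deriv_nonneg (convex_Ioi 0)
  · exact ContinuousOn.div hF.continuous.continuousOn hG.continuous.continuousOn
      (fun t ht => ne_of_gt (hGpos t ht))
  · rw [interior_Ioi]
    intro t ht
    exact ((hF t).div (hG t) (ne_of_gt (hGpos t ht))).differentiableWithinAt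
  · rw [interior_Ioi]
    intro t ht
    have hD : HasDerivAt (fun s => F s / G s)
        ((deriv F t * G t - F t * deriv G t) / G t ^ 2) t :=
      (hF t).hasDerivAt.div (hG t).hasDerivAt (ne_of_gt (hGpos t ht))
    rw [hD.deriv]
    apply div_nonneg _ (sq_nonneg _)
    linarith [key t ht]

private lemma pow_ratio_mono_aux (f : ℝ → ℝ) (p : ℝ) (hf : Differentiable ℝ f)
    (hind : ∀ t > 0, p * f t ≤ t * deriv f t) :
    MonotoneOn (fun s => f s / s ^ p) (Set.Ioi 0) := by
  apply monotoneOn_of_deriv_nonneg (convex_Ioi 0)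
  · apply ContinuousOn.div hf.continuous.continuousOn
    · intro s hs
      exact (Real.continuousAt_rpow_const s p (Or.inl (ne_of_gt hs))).continuousWithinAt
    · intro s hs
      exact ne_of_gt (Real.rpow_pos_of_pos hs p)
  · rw [interior_Ioi]
    intro s hs
    exact ((hf s).hasDerivAt.div
      (Real.hasDerivAt_rpow_const (p := p) (Or.inl (ne_of_gt hs)))
      (ne_of_gt (Real.rpow_pos_of_pos hs p))).differentiableAt.differentiableWithinAt
  · rw [interior_Ioi]
    intro s hs
    have hD := (hf s).hasDerivAt.div
      (Real.hasDerivAt_rpow_const (p := p) (Or.inl (ne_of_gt hs)))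
      (ne_of_gt (Real.rpow_pos_of_pos hs p))
    rw [show deriv (fun s => f s / s ^ p) s = _ from hD.deriv]
    apply div_nonneg _ (sq_nonneg _)
    have e3 := hind s hs
    have hsplit : s ^ p = s * s ^ (p - 1) := by
      rw [mul_comm, ← Real.rpow_add_one (ne_of_gt hs) (p - 1)]
      norm_num
    rw [hsplit]
    have hpow : (0:ℝ) ≤ s ^ (p - 1) := (Real.rpow_pos_of_pos hs _).le
    nlinarith [mul_le_mul_of_nonneg_right e3 hpow]

private lemma pow_ratio_anti_aux (f : ℝ → ℝ) (p : ℝ) (hf : Differentiable ℝ f)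
    (hind : ∀ t > 0, t * deriv f t ≤ p * f t) :
    AntitoneOn (fun s => f s / s ^ p) (Set.Ioi 0) := by
  apply antitoneOn_of_deriv_nonpos (convex_Ioi 0)
  · apply ContinuousOn.div hf.continuous.continuousOn
    · intro s hs
      exact (Real.continuousAt_rpow_const s p (Or.inl (ne_of_gt hs))).continuousWithinAt
    · intro s hs
      exact ne_of_gt (Real.rpow_pos_of_pos hs p)
  · rw [interior_Ioi]
    intro s hs
    exact ((hf s).hasDerivAt.div
      (Real.hasDerivAt_rpow_const (p := p) (Or.inl (ne_of_gt hs)))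
      (ne_of_gt (Real.rpow_pos_of_pos hs p))).differentiableAt.differentiableWithinAt
  · rw [interior_Ioi]
    intro s hs
    have hD := (hf s).hasDerivAt.div
      (Real.hasDerivAt_rpow_const (p := p) (Or.inl (ne_of_gt hs)))
      (ne_of_gt (Real.rpow_pos_of_pos hs p))
    rw [show deriv (fun s => f s / s ^ p) s = _ from hD.deriv]
    apply div_nonpos_of_nonpos_of_nonneg _ (sq_nonneg _)
    have e2 := hind s hs
    have hsplit : s ^ p = s * s ^ (p - 1) := by
      rw [mul_comm, ← Real.rpow_add_one (ne_of_gt hs) (p - 1)]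
      norm_num
    rw [hsplit]
    have hpow : (0:ℝ) ≤ s ^ (p - 1) := (Real.rpow_pos_of_pos hs _).le
    nlinarith [mul_le_mul_of_nonneg_right e2 hpow]

/-- If, in addition to the hypotheses making `Θ ∘ Λ⁻¹` convex, one has `s_Λ < i_Θ`
(the indices `i_Λ = inf tΛ'/Λ`, `s_Λ = sup tΛ'/Λ`, etc.), then `Υ := Θ ∘ Λ⁻¹` is a Young
function and its indices satisfy `1 < i_Θ/s_Λ ≤ i_Υ ≤ s_Υ ≤ s_Θ/i_Λ < ∞`, stated via the
pointwise bounds `i_Θ/s_Λ ≤ t Υ'(t)/Υ(t) ≤ s_Θ/i_Λ` for all `t > 0`. -/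
theorem composition_with_inverse_young (Λ Θ Λinv : ℝ → ℝ)
    (iil ssl iith ssth iΛ sΛ iΘ sΘ : ℝ)
    (hΛC2 : ContDiff ℝ 2 Λ) (hΘC2 : ContDiff ℝ 2 Θ)
    (hΛ0 : Λ 0 = 0) (hΘ0 : Θ 0 = 0)
    (hΛ' : ∀ t > 0, 0 < deriv Λ t) (hΘ' : ∀ t > 0, 0 < deriv Θ t)
    (hΛpos : ∀ t > 0, 0 < Λ t) (hΘpos : ∀ t > 0, 0 < Θ t)
    (hΛconv : ConvexOn ℝ (Set.Ici 0) Λ) (hΘconv : ConvexOn ℝ (Set.Ici 0) Θ)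
    (hinv₁ : ∀ t ≥ 0, Λ (Λinv t) = t) (hinv₂ : ∀ t ≥ 0, Λinv (Λ t) = t)
    (hinvnn : ∀ t ≥ 0, 0 ≤ Λinv t)
    -- indices of the derivatives: 0 < i_λ ≤ s_λ ≤ i_θ ≤ s_θ < ∞
    (hiil : 0 < iil)
    (hlowΛ : ∀ t > 0, iil ≤ t * deriv (deriv Λ) t / deriv Λ t)
    (hhighΛ : ∀ t > 0, t * deriv (deriv Λ) t / deriv Λ t ≤ ssl)
    (hlowΘ : ∀ t > 0, iith ≤ t * deriv (deriv Θ) t / deriv Θ t)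
    (hhighΘ : ∀ t > 0, t * deriv (deriv Θ) t / deriv Θ t ≤ ssth)
    (horder₁ : iil ≤ ssl) (horder₂ : ssl ≤ iith) (horder₃ : iith ≤ ssth)
    -- indices of Λ and Θ themselves, with s_Λ < i_Θ
    (hiΛ : 0 < iΛ)
    (hΛind : ∀ t > 0, iΛ ≤ t * deriv Λ t / Λ t ∧ t * deriv Λ t / Λ t ≤ sΛ)
    (hΘind : ∀ t > 0, iΘ ≤ t * deriv Θ t / Θ t ∧ t * deriv Θ t / Θ t ≤ sΘ)
    (hsΛpos : 0 < sΛ) (hcross : sΛ < iΘ) :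
    (ConvexOn ℝ (Set.Ici 0) (Θ ∘ Λinv)) ∧
    (Θ ∘ Λinv) 0 = 0 ∧ (∀ t > 0, 0 < (Θ ∘ Λinv) t) ∧
    Filter.Tendsto (fun t => (Θ ∘ Λinv) t / t) (nhdsWithin 0 (Set.Ioi 0)) (nhds 0) ∧
    Filter.Tendsto (fun t => (Θ ∘ Λinv) t / t) Filter.atTop Filter.atTop ∧
    1 < iΘ / sΛ ∧
    (∀ t > 0, iΘ / sΛ ≤ t * deriv (Θ ∘ Λinv) t / (Θ ∘ Λinv) t ∧
      t * deriv (Θ ∘ Λinv) t / (Θ ∘ Λinv) t ≤ sΘ / iΛ) := by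
  -- basic differentiability facts
  have hΛdiff : Differentiable ℝ Λ := hΛC2.differentiable (by norm_num)
  have hΘdiff : Differentiable ℝ Θ := hΘC2.differentiable (by norm_num)
  have hΛ'C1 : ContDiff ℝ 1 (deriv Λ) :=
    (contDiff_succ_iff_deriv.mp (show ContDiff ℝ (1 + 1) Λ from hΛC2)).2.2
  have hΘ'C1 : ContDiff ℝ 1 (deriv Θ) :=
    (contDiff_succ_iff_deriv.mp (show ContDiff ℝ (1 + 1) Θ from hΘC2)).2.2
  have hΛ'diff : Differentiable ℝ (deriv Λ) := hΛ'C1.differentiable one_ne_zero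
  have hΘ'diff : Differentiable ℝ (deriv Θ) := hΘ'C1.differentiable one_ne_zero
  -- basic facts about Λ and Λinv
  have hΛinv0 : Λinv 0 = 0 := by
    have := hinv₂ 0 le_rfl; rwa [hΛ0] at this
  have hΛmono : StrictMonoOn Λ (Ici 0) := by
    apply strictMonoOn_of_deriv_pos (convex_Ici 0) hΛdiff.continuous.continuousOn
    rw [interior_Ici]; exact fun x hx => hΛ' x hx
  have hΛinvpos : ∀ t > 0, 0 < Λinv t := by
    intro t ht
    rcases (hinvnn t ht.le).lt_or_eq with h | h
    · exact h
    · exfalso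
      have := hinv₁ t ht.le
      rw [← h, hΛ0] at this
      exact absurd this.symm (ne_of_gt ht)
  have hΛinvmono : StrictMonoOn Λinv (Ici 0) := by
    intro a ha b hb hab
    by_contra h
    push_neg at h
    have : Λ (Λinv b) ≤ Λ (Λinv a) := by
      rcases h.lt_or_eq with h' | h'
      · exact (hΛmono (hinvnn b hb) (hinvnn a ha) h').le
      · rw [h']
    rw [hinv₁ a ha, hinv₁ b hb] at this
    exact absurd hab (not_lt.2 this)
  have hΛinvmonoOn : MonotoneOn Λinv (Ici 0) := hΛinvmono.monotoneOn
  -- continuity of Λinv at positive points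
  have hcont : ∀ t > 0, ContinuousAt Λinv t := by
    intro t ht
    have hτ : 0 < Λinv t := hΛinvpos t ht
    rw [ContinuousAt]
    apply tendsto_order.2
    constructor
    · intro a ha
      rcases lt_or_ge a 0 with h0 | h0
      · filter_upwards [eventually_gt_nhds ht] with y hy
        exact h0.trans_le (hinvnn y hy.le)
      · have hLa : Λ a < t := by
          have h1 : Λ a < Λ (Λinv t) := hΛmono h0 (hinvnn t ht.le) ha
          rwa [hinv₁ t ht.le] at h1
        filter_upwards [eventually_gt_nhds hLa, eventually_gt_nhds ht] with y hy hy0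
        have h2 : Λinv (Λ a) < Λinv y := by
          have hLa0 : 0 ≤ Λ a := by
            rcases h0.lt_or_eq with h' | h'
            · exact (hΛpos a h').le
            · rw [← h', hΛ0]
          exact hΛinvmono hLa0 hy0.le hy
        rwa [hinv₂ a h0] at h2
    · intro b hb
      have hb0 : 0 < b := hτ.trans hb
      have hLb : t < Λ b := by
        have h1 : Λ (Λinv t) < Λ b := hΛmono (hinvnn t ht.le) hb0.le hb
        rwa [hinv₁ t ht.le] at h1
      filter_upwards [eventually_lt_nhds hLb, eventually_gt_nhds ht] with y hy hy0
      have h2 : Λinv y < Λinv (Λ b) := hΛinvmono hy0.le (hΛpos b hb0).le hy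
      rwa [hinv₂ b hb0.le] at h2
  -- derivative of Θ ∘ Λinv at positive points
  have hUps : ∀ t > 0, HasDerivAt (Θ ∘ Λinv)
      (deriv Θ (Λinv t) * (deriv Λ (Λinv t))⁻¹) t := by
    intro t ht
    have hτ : 0 < Λinv t := hΛinvpos t ht
    have hinvDeriv : HasDerivAt Λinv (deriv Λ (Λinv t))⁻¹ t := by
      apply HasDerivAt.of_local_left_inverse (hcont t ht)
        ((hΛdiff (Λinv t)).hasDerivAt) (ne_of_gt (hΛ' _ hτ))
      filter_upwards [eventually_gt_nhds ht] with y hy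
      exact hinv₁ y hy.le
    exact (hΘdiff (Λinv t)).hasDerivAt.comp t hinvDeriv
  -- Part 2: value at 0
  have hΥ0 : (Θ ∘ Λinv) 0 = 0 := by
    simp [Function.comp, hΛinv0, hΘ0]
  -- Part 3: positivity
  have hΥpos : ∀ t > 0, 0 < (Θ ∘ Λinv) t := fun t ht =>
    hΘpos _ (hΛinvpos t ht)
  -- Part 6
  have hone : 1 < iΘ / sΛ := (one_lt_div hsΛpos).2 hcross
  -- Part 7: pointwise index bounds
  have hbounds : ∀ t > 0, iΘ / sΛ ≤ t * deriv (Θ ∘ Λinv) t / (Θ ∘ Λinv) t ∧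
      t * deriv (Θ ∘ Λinv) t / (Θ ∘ Λinv) t ≤ sΘ / iΛ := by
    intro t ht
    set τ := Λinv t with hτdef
    have hτ : 0 < τ := hΛinvpos t ht
    have hΛ'p := hΛ' τ hτ
    have hΘ'p := hΘ' τ hτ
    have hΛp := hΛpos τ hτ
    have hΘp := hΘpos τ hτ
    obtain ⟨hl1, hl2⟩ := hΛind τ hτ
    obtain ⟨ht1, ht2⟩ := hΘind τ hτ
    have e1 : iΛ * Λ τ ≤ τ * deriv Λ τ := (le_div_iff₀ hΛp).mp hl1
    have e2 : τ * deriv Λ τ ≤ sΛ * Λ τ := (div_le_iff₀ hΛp).mp hl2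
    have e3 : iΘ * Θ τ ≤ τ * deriv Θ τ := (le_div_iff₀ hΘp).mp ht1
    have e4 : τ * deriv Θ τ ≤ sΘ * Θ τ := (div_le_iff₀ hΘp).mp ht2
    have key : t * deriv (Θ ∘ Λinv) t / (Θ ∘ Λinv) t
        = (Λ τ * deriv Θ τ) / (deriv Λ τ * Θ τ) := by
      have hd : deriv (Θ ∘ Λinv) t = deriv Θ τ * (deriv Λ τ)⁻¹ := by
        rw [hτdef]; exact (hUps t ht).deriv
      have hUt : (Θ ∘ Λinv) t = Θ τ := rfl
      have ht' : t = Λ τ := (hinv₁ t ht.le).symm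
      rw [hd, hUt, ht']
      field_simp
    rw [key]
    constructor
    · rw [div_le_div_iff₀ hsΛpos (mul_pos hΛ'p hΘp)]
      have h5 : (iΘ * Θ τ) * (τ * deriv Λ τ) ≤ (τ * deriv Θ τ) * (τ * deriv Λ τ) :=
        mul_le_mul_of_nonneg_right e3 (by positivity)
      have h6 : (τ * deriv Θ τ) * (τ * deriv Λ τ) ≤ (τ * deriv Θ τ) * (sΛ * Λ τ) :=
        mul_le_mul_of_nonneg_left e2 (by positivity)
      have h7 : τ * (iΘ * (deriv Λ τ * Θ τ)) ≤ τ * (Λ τ * deriv Θ τ * sΛ) := by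
        nlinarith [h5.trans h6]
      exact le_of_mul_le_mul_left h7 hτ
    · rw [div_le_div_iff₀ (mul_pos hΛ'p hΘp) hiΛ]
      have h5 : (iΛ * Λ τ) * (τ * deriv Θ τ) ≤ (τ * deriv Λ τ) * (τ * deriv Θ τ) :=
        mul_le_mul_of_nonneg_right e1 (by positivity)
      have h6 : (τ * deriv Λ τ) * (τ * deriv Θ τ) ≤ (τ * deriv Λ τ) * (sΘ * Θ τ) :=
        mul_le_mul_of_nonneg_left e4 (by positivity)
      have h7 : τ * (Λ τ * deriv Θ τ * iΛ) ≤ τ * (sΘ * (deriv Λ τ * Θ τ)) := by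
        nlinarith [h5.trans h6]
      exact le_of_mul_le_mul_left h7 hτ
  -- monotonicity of the ratio of derivatives
  have hratio_mono : MonotoneOn (fun τ => deriv Θ τ / deriv Λ τ) (Ioi 0) := by
    apply deriv_ratio_mono_aux (deriv Θ) (deriv Λ) hΘ'diff hΛ'diff hΛ'
    intro τ hτ
    have hΛ'p := hΛ' τ hτ
    have hΘ'p := hΘ' τ hτ
    have f1 : iith * deriv Θ τ ≤ τ * deriv (deriv Θ) τ :=
      (le_div_iff₀ hΘ'p).mp (hlowΘ τ hτ)
    have f2 : τ * deriv (deriv Λ) τ ≤ ssl * deriv Λ τ :=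
      (div_le_iff₀ hΛ'p).mp (hhighΛ τ hτ)
    have h7 : τ * (deriv Θ τ * deriv (deriv Λ) τ) ≤ τ * (deriv (deriv Θ) τ * deriv Λ τ) := by
      nlinarith [mul_le_mul_of_nonneg_right f1 hΛ'p.le,
        mul_le_mul_of_nonneg_left f2 hΘ'p.le,
        mul_le_mul_of_nonneg_right horder₂ (mul_pos hΘ'p hΛ'p).le]
    exact le_of_mul_le_mul_left h7 hτ
  -- continuity of Λinv within [0,∞) at 0
  have hΛinvtendsto0 : Tendsto Λinv (𝓝[Ici 0] (0:ℝ)) (𝓝 0) := by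
    apply tendsto_order.2
    constructor
    · intro a ha
      filter_upwards [self_mem_nhdsWithin] with y hy
      exact ha.trans_le (hinvnn y hy)
    · intro b hb
      filter_upwards [self_mem_nhdsWithin,
        eventually_nhdsWithin_of_eventually_nhds (eventually_lt_nhds (hΛpos b hb))]
        with y hy hyb
      have h2 : Λinv y < Λinv (Λ b) := hΛinvmono hy (hΛpos b hb).le hyb
      rwa [hinv₂ b hb.le] at h2
  have hΥcont : ContinuousOn (Θ ∘ Λinv) (Ici 0) := by
    intro t ht
    rcases (show (0:ℝ) ≤ t from ht).lt_or_eq with h | h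
    · exact ((hΘdiff.continuous.continuousAt).comp (hcont t h)).continuousWithinAt
    · rw [← h]
      have h3 : Tendsto (Θ ∘ Λinv) (𝓝[Ici 0] (0:ℝ)) (𝓝 (Θ 0)) :=
        (hΘdiff.continuous.continuousAt.tendsto).comp hΛinvtendsto0
      rw [ContinuousWithinAt, hΥ0]
      rwa [hΘ0] at h3
  -- convexity
  have hΥconv : ConvexOn ℝ (Ici 0) (Θ ∘ Λinv) := by
    apply MonotoneOn.convexOn_of_deriv (convex_Ici 0) hΥcont
    · rw [interior_Ici]
      exact fun t ht => (hUps t ht).differentiableAt.differentiableWithinAt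
    · rw [interior_Ici]
      intro a ha b hb hab
      rw [(hUps a ha).deriv, (hUps b hb).deriv]
      have h := hratio_mono (hΛinvpos a ha) (hΛinvpos b hb)
        (hΛinvmonoOn (mem_Ici.2 (le_of_lt ha)) (mem_Ici.2 (le_of_lt hb)) hab)
      simpa [div_eq_mul_inv] using h
  -- power comparison lemmas
  have hGmono : MonotoneOn (fun s : ℝ => Θ s / s ^ iΘ) (Ioi 0) := by
    apply pow_ratio_mono_aux Θ iΘ hΘdiff
    intro s hs
    exact (le_div_iff₀ (hΘpos s hs)).mp (hΘind s hs).1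
  have hHanti : AntitoneOn (fun s : ℝ => Λ s / s ^ sΛ) (Ioi 0) := by
    apply pow_ratio_anti_aux Λ sΛ hΛdiff
    intro s hs
    exact (div_le_iff₀ (hΛpos s hs)).mp (hΛind s hs).2
  have hδ : 0 < iΘ - sΛ := by linarith
  have hC : 0 < Θ 1 / Λ 1 := div_pos (hΘpos 1 one_pos) (hΛpos 1 one_pos)
  -- the ratio Θ/Λ tends to 0 at 0+
  have hratio0 : Tendsto (fun τ => Θ τ / Λ τ) (𝓝[>] (0:ℝ)) (𝓝 0) := by
    have hg : Tendsto (fun τ : ℝ => Θ 1 / Λ 1 * τ ^ (iΘ - sΛ)) (𝓝[>] (0:ℝ)) (𝓝 0) := by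
      have h1 : Tendsto (fun τ : ℝ => τ ^ (iΘ - sΛ)) (𝓝 (0:ℝ)) (𝓝 0) := by
        have h2 := (Real.continuousAt_rpow_const 0 (iΘ - sΛ) (Or.inr hδ.le)).tendsto
        rwa [Real.zero_rpow (ne_of_gt hδ)] at h2
      have h3 := (h1.const_mul (Θ 1 / Λ 1)).mono_left (nhdsWithin_le_nhds : 𝓝[>] (0:ℝ) ≤ 𝓝 0)
      simpa using h3
    apply tendsto_of_tendsto_of_tendsto_of_le_of_le' tendsto_const_nhds hg
    · filter_upwards [self_mem_nhdsWithin] with τ hτ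
      exact div_nonneg (hΘpos τ hτ).le (hΛpos τ hτ).le
    · filter_upwards [self_mem_nhdsWithin,
        eventually_nhdsWithin_of_eventually_nhds (eventually_lt_nhds one_pos)] with τ hτ hτ1
      have hΘb : Θ τ ≤ Θ 1 * τ ^ iΘ := by
        have h1 := hGmono hτ (mem_Ioi.2 one_pos) hτ1.le
        simp only [Real.one_rpow, div_one] at h1
        exact (div_le_iff₀ (Real.rpow_pos_of_pos hτ iΘ)).mp h1
      have hΛb : Λ 1 * τ ^ sΛ ≤ Λ τ := by
        have h1 := hHanti hτ (mem_Ioi.2 one_pos) hτ1.le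
        simp only [Real.one_rpow, div_one] at h1
        exact (le_div_iff₀ (Real.rpow_pos_of_pos hτ sΛ)).mp h1
      have hden : 0 < Λ 1 * τ ^ sΛ := mul_pos (hΛpos 1 one_pos) (Real.rpow_pos_of_pos hτ sΛ)
      calc Θ τ / Λ τ ≤ (Θ 1 * τ ^ iΘ) / (Λ 1 * τ ^ sΛ) :=
            div_le_div₀ (mul_pos (hΘpos 1 one_pos) (Real.rpow_pos_of_pos hτ iΘ)).le hΘb hden hΛb
        _ = Θ 1 / Λ 1 * τ ^ (iΘ - sΛ) := by
            rw [Real.rpow_sub hτ, div_mul_div_comm]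
  -- the ratio Θ/Λ tends to ∞ at ∞
  have hevTop : ∀ᶠ τ in atTop, Θ 1 / Λ 1 * τ ^ (iΘ - sΛ) ≤ Θ τ / Λ τ := by
    filter_upwards [eventually_ge_atTop 1] with τ hτ1
    have hτ : (0:ℝ) < τ := lt_of_lt_of_le one_pos hτ1
    have hΘb : Θ 1 * τ ^ iΘ ≤ Θ τ := by
      have h1 := hGmono (mem_Ioi.2 one_pos) (mem_Ioi.2 hτ) hτ1
      simp only [Real.one_rpow, div_one] at h1
      exact (le_div_iff₀ (Real.rpow_pos_of_pos hτ iΘ)).mp h1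
    have hΛb : Λ τ ≤ Λ 1 * τ ^ sΛ := by
      have h1 := hHanti (mem_Ioi.2 one_pos) (mem_Ioi.2 hτ) hτ1
      simp only [Real.one_rpow, div_one] at h1
      exact (div_le_iff₀ (Real.rpow_pos_of_pos hτ sΛ)).mp h1
    calc Θ 1 / Λ 1 * τ ^ (iΘ - sΛ) = (Θ 1 * τ ^ iΘ) / (Λ 1 * τ ^ sΛ) := by
          rw [Real.rpow_sub hτ, div_mul_div_comm]
      _ ≤ Θ τ / Λ τ := div_le_div₀ (hΘpos τ hτ).le hΘb (hΛpos τ hτ) hΛb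
  have hratioTop : Tendsto (fun τ => Θ τ / Λ τ) atTop atTop :=
    tendsto_atTop_mono' atTop hevTop ((tendsto_rpow_atTop hδ).const_mul_atTop hC)
  -- Part 4
  have hΛinvtendsto0' : Tendsto Λinv (𝓝[>] (0:ℝ)) (𝓝[>] (0:ℝ)) := by
    rw [tendsto_nhdsWithin_iff]
    constructor
    · exact hΛinvtendsto0.mono_left (nhdsWithin_mono 0 Ioi_subset_Ici_self)
    · filter_upwards [self_mem_nhdsWithin] with y hy
      exact mem_Ioi.2 (hΛinvpos y hy)
  have hpart4 : Tendsto (fun t => (Θ ∘ Λinv) t / t) (𝓝[>] (0:ℝ)) (𝓝 0) := by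
    apply (hratio0.comp hΛinvtendsto0').congr'
    filter_upwards [self_mem_nhdsWithin] with t ht
    simp only [Function.comp]
    rw [hinv₁ t (le_of_lt ht)]
  -- Part 5
  have hΛinvtop : Tendsto Λinv atTop atTop := by
    apply tendsto_atTop.2
    intro b
    have hb0 : (0:ℝ) ≤ max b 0 := le_max_right b 0
    have hΛb0 : 0 ≤ Λ (max b 0) := by
      rcases hb0.lt_or_eq with h | h
      · exact (hΛpos _ h).le
      · rw [← h, hΛ0]
    filter_upwards [eventually_ge_atTop (Λ (max b 0))] with y hy
    have h2 : Λinv (Λ (max b 0)) ≤ Λinv y := hΛinvmonoOn hΛb0 (hΛb0.trans hy) hy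
    rw [hinv₂ _ hb0] at h2
    exact le_trans (le_max_left b 0) h2
  have hpart5 : Tendsto (fun t => (Θ ∘ Λinv) t / t) atTop atTop := by
    apply (hratioTop.comp hΛinvtop).congr'
    filter_upwards [eventually_gt_atTop 0] with t ht
    simp only [Function.comp]
    rw [hinv₁ t (le_of_lt ht)]
  exact ⟨hΥconv, hΥ0, hΥpos, hpart4, hpart5, hone, hbounds⟩
end

section
/- Let Λ, Θ be Young functions such that there exist c, T > 0 with Λ(t) ≤ Θ(ct) for all t ≥ T (written Λ < Θ), and let h ∈ L¹(ℝᴺ) ∩ L^∞(ℝᴺ). Then there exists a constant C depending only on Λ, Θ, ‖h‖₁, ‖h‖_∞ such that ‖h·u‖_Λ ≤ C ‖u‖_Θ for all u ∈ L^Θ(ℝᴺ). In fact one may take C = c(‖h‖_∞ + Λ(T)‖h‖₁). -/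
open MeasureTheory
open scoped ENNReal

/-- The Luxemburg norm of `f` in the Orlicz space `L^Λ(μ)`. -/
noncomputable def luxNorm {α : Type*} [MeasurableSpace α] (μ : Measure α)
    (Λ : ℝ → ℝ) (f : α → ℝ) : ℝ :=
  sInf {τ : ℝ | 0 < τ ∧ ∫⁻ x, ENNReal.ofReal (Λ (|f x| / τ)) ∂μ ≤ 1}

/-- Scaling inequality for a convex function vanishing at `0`. -/
lemma young_scale {f : ℝ → ℝ} (hconv : ConvexOn ℝ (Set.Ici 0) f) (hf0 : f 0 = 0)
    {l s : ℝ} (hl0 : 0 ≤ l) (hl1 : l ≤ 1) (hs : 0 ≤ s) : f (l * s) ≤ l * f s := by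
  have := hconv.2 (Set.mem_Ici.2 hs) (Set.mem_Ici.2 (le_refl (0:ℝ))) hl0
    (by linarith : (0:ℝ) ≤ 1 - l) (by ring)
  simpa [hf0, smul_eq_mul] using this

lemma pointwise_bound (Λ Θ : ℝ → ℝ)
    (hΛmono : MonotoneOn Λ (Set.Ici 0)) (hΘmono : MonotoneOn Θ (Set.Ici 0))
    (hΛ0 : Λ 0 = 0) (hΘ0 : Θ 0 = 0)
    (hΛconv : ConvexOn ℝ (Set.Ici 0) Λ)
    (c T M R I τ a b : ℝ) (hc : 0 < c) (hT : 0 < T) (hM : 0 < M)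
    (hR : R = 1 + Λ T * I / M) (hI : 0 ≤ I) (hΛT : 0 ≤ Λ T)
    (hτ : 0 < τ) (ha : 0 ≤ a) (hb : 0 ≤ b) (hbM : b ≤ M)
    (hdom : ∀ t ≥ T, Λ t ≤ Θ (c * t)) :
    Λ (b * a / (c * M * R * τ)) ≤ (1/R) * Θ (a/τ) + (Λ T / (M*R)) * b := by
  have hR1 : (1:ℝ) ≤ R := by
    rw [hR]
    have : 0 ≤ Λ T * I / M := by positivity
    linarith
  have hRpos : (0:ℝ) < R := by linarith
  have hΘnn : 0 ≤ Θ (a/τ) := by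
    have := hΘmono (Set.mem_Ici.2 (le_refl (0:ℝ))) (Set.mem_Ici.2 (by positivity : (0:ℝ) ≤ a/τ))
      (by positivity)
    rw [hΘ0] at this; exact this
  by_cases hcase : c * T * τ ≤ a
  · -- large values of |u|
    have h1 : b * a / (c * M * R * τ) ≤ a / (c * R * τ) := by
      rw [div_le_div_iff₀ (by positivity) (by positivity)]
      have hmul := mul_le_mul_of_nonneg_right hbM
        (mul_nonneg ha (by positivity : (0:ℝ) ≤ c * R * τ))
      nlinarith [hmul]
    have h2 : Λ (b * a / (c * M * R * τ)) ≤ Λ (a / (c * R * τ)) :=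
      hΛmono (Set.mem_Ici.2 (by positivity)) (Set.mem_Ici.2 (by positivity)) h1
    have h3 : a / (c * R * τ) = (1/R) * (a / (c * τ)) := by
      rw [div_mul_div_comm, one_mul]; ring_nf
    have h4 : Λ ((1/R) * (a / (c * τ))) ≤ (1/R) * Λ (a / (c * τ)) :=
      young_scale hΛconv hΛ0 (by positivity) (by
        rw [div_le_one hRpos]; exact hR1) (by positivity)
    have h5 : T ≤ a / (c * τ) := by
      rw [le_div_iff₀ (by positivity)]; nlinarith
    have h6 : Λ (a / (c * τ)) ≤ Θ (c * (a / (c * τ))) := hdom _ h5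
    have h7 : c * (a / (c * τ)) = a / τ := by
      rw [← mul_div_assoc, mul_div_mul_left _ _ (ne_of_gt hc)]
    have h8 : 0 ≤ (Λ T / (M*R)) * b := by positivity
    rw [h7] at h6
    calc Λ (b * a / (c * M * R * τ)) ≤ Λ (a / (c * R * τ)) := h2
      _ = Λ ((1/R) * (a / (c * τ))) := by rw [h3]
      _ ≤ (1/R) * Λ (a / (c * τ)) := h4
      _ ≤ (1/R) * Θ (a/τ) := by
          apply mul_le_mul_of_nonneg_left h6 (by positivity)
      _ ≤ (1/R) * Θ (a/τ) + (Λ T / (M*R)) * b := by linarith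
  · -- small values of |u|
    push_neg at hcase
    have h1 : b * a / (c * M * R * τ) ≤ (b / (M*R)) * T := by
      rw [div_le_iff₀ (by positivity)]
      have : b * a ≤ b * (c * T * τ) := by nlinarith
      calc b * a ≤ b * (c * T * τ) := this
        _ = b / (M*R) * T * (c * M * R * τ) := by field_simp
    have h2 : Λ (b * a / (c * M * R * τ)) ≤ Λ ((b / (M*R)) * T) :=
      hΛmono (Set.mem_Ici.2 (by positivity)) (Set.mem_Ici.2 (by positivity)) h1
    have h3 : Λ ((b / (M*R)) * T) ≤ (b / (M*R)) * Λ T := by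
      apply young_scale hΛconv hΛ0 (by positivity) _ (le_of_lt hT)
      rw [div_le_one (by positivity)]
      nlinarith
    have h4 : (b / (M*R)) * Λ T = (Λ T / (M*R)) * b := by ring
    have h5 : 0 ≤ (1/R) * Θ (a/τ) := by positivity
    linarith

/-- If `Λ < Θ` (i.e. `Λ(t) ≤ Θ(ct)` for `t ≥ T`) and `h ∈ L¹(ℝᴺ) ∩ L^∞(ℝᴺ)`, then
`‖h u‖_Λ ≤ C ‖u‖_Θ` for all `u ∈ L^Θ(ℝᴺ)`, with `C = c(‖h‖_∞ + Λ(T)‖h‖₁)`. -/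
theorem luxNorm_mul_le {N : ℕ} (Λ Θ : ℝ → ℝ)
    (hΛcont : Continuous Λ) (hΘcont : Continuous Θ)
    (hΛmono : MonotoneOn Λ (Set.Ici 0)) (hΘmono : MonotoneOn Θ (Set.Ici 0))
    (hΛ0 : Λ 0 = 0) (hΘ0 : Θ 0 = 0)
    (hΛpos : ∀ t > 0, 0 < Λ t) (hΘpos : ∀ t > 0, 0 < Θ t)
    (hΛconv : ConvexOn ℝ (Set.Ici 0) Λ) (hΘconv : ConvexOn ℝ (Set.Ici 0) Θ)
    (c T : ℝ) (hc : 0 < c) (hT : 0 < T)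
    (hdom : ∀ t ≥ T, Λ t ≤ Θ (c * t))
    (h : EuclideanSpace ℝ (Fin N) → ℝ)
    (h1 : MemLp h 1 volume) (hinfty : MemLp h ⊤ volume) :
    ∀ u : EuclideanSpace ℝ (Fin N) → ℝ, AEStronglyMeasurable u volume →
      (∃ τ > (0:ℝ), ∫⁻ x, ENNReal.ofReal (Θ (|u x| / τ)) ≤ 1) →
      luxNorm volume Λ (fun x => h x * u x) ≤
        c * ((eLpNorm h ⊤ volume).toReal + Λ T * (eLpNorm h 1 volume).toReal) *
          luxNorm volume Θ u := by
  intro u hu ⟨τ₀, hτ₀pos, hτ₀int⟩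
  set M : ℝ := (eLpNorm h ⊤ volume).toReal with hMdef
  set I : ℝ := (eLpNorm h 1 volume).toReal with hIdef
  have hMnn : 0 ≤ M := ENNReal.toReal_nonneg
  have hInn : 0 ≤ I := ENNReal.toReal_nonneg
  have hΛT : 0 ≤ Λ T := le_of_lt (hΛpos T hT)
  rcases eq_or_lt_of_le hMnn with hM0 | hMpos
  · -- degenerate case: h = 0 a.e.
    have heLp : eLpNorm h ⊤ volume = 0 := by
      have hne : eLpNorm h ⊤ volume ≠ ⊤ := hinfty.2.ne
      rcases ENNReal.toReal_eq_zero_iff _ |>.1 hM0.symm with h' | h'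
      · exact h'
      · exact absurd h' hne
    have hzero : h =ᶠ[ae volume] 0 :=
      (eLpNorm_eq_zero_iff hinfty.1 (by norm_num)).1 heLp
    have hI0 : I = 0 := by
      rw [hIdef, eLpNorm_congr_ae hzero, eLpNorm_zero, ENNReal.toReal_zero]
    have hlux : luxNorm volume Λ (fun x => h x * u x) = 0 := by
      have hset : {τ : ℝ | 0 < τ ∧
          ∫⁻ x, ENNReal.ofReal (Λ (|h x * u x| / τ)) ∂volume ≤ 1} = Set.Ioi 0 := by
        ext τ
        simp only [Set.mem_setOf_eq, Set.mem_Ioi]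
        constructor
        · exact fun h => h.1
        · intro hτ
          refine ⟨hτ, ?_⟩
          have : ∫⁻ x, ENNReal.ofReal (Λ (|h x * u x| / τ)) ∂volume = 0 := by
            rw [← lintegral_zero (μ := (volume : Measure (EuclideanSpace ℝ (Fin N))))]
            apply lintegral_congr_ae
            filter_upwards [hzero] with x hx
            simp [hx, hΛ0]
          rw [this]; exact zero_le_one
      show sInf _ = 0
      rw [hset, csInf_Ioi]
    rw [hlux, ← hM0, hI0]
    simp
  · -- main case: M > 0
    set R : ℝ := 1 + Λ T * I / M with hRdef
    have hR1 : (1:ℝ) ≤ R := by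
      have : 0 ≤ Λ T * I / M := div_nonneg (mul_nonneg hΛT hInn) hMnn
      rw [hRdef]; linarith
    have hRpos : (0:ℝ) < R := by linarith
    have hMR : M * R = M + Λ T * I := by
      rw [hRdef]; field_simp
    have hCeq : c * (M + Λ T * I) = c * M * R := by
      rw [mul_assoc, hMR]
    have hCpos : 0 < c * (M + Λ T * I) := by
      have h0 : 0 ≤ Λ T * I := mul_nonneg hΛT hInn
      apply mul_pos hc; linarith
    have hRinv : (0:ℝ) ≤ 1/R := le_of_lt (one_div_pos.mpr hRpos)
    have hcoef : (0:ℝ) ≤ Λ T / (M*R) := div_nonneg hΛT (le_of_lt (mul_pos hMpos hRpos))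
    -- a.e. bound on |h|
    have hhb : ∀ᵐ x ∂(volume : Measure (EuclideanSpace ℝ (Fin N))), |h x| ≤ M := by
      filter_upwards [ae_le_eLpNormEssSup (f := h) (μ := volume)] with x hx
      have hne : eLpNormEssSup h volume ≠ ⊤ := by
        rw [← eLpNorm_exponent_top]; exact hinfty.2.ne
      have := ENNReal.toReal_mono hne hx
      simpa [hMdef, eLpNorm_exponent_top, Real.norm_eq_abs] using this
    -- the key integral estimate
    have key : ∀ τ : ℝ, 0 < τ → (∫⁻ x, ENNReal.ofReal (Θ (|u x| / τ)) ≤ 1) →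
        ∫⁻ x, ENNReal.ofReal (Λ (|h x * u x| / (c * (M + Λ T * I) * τ))) ∂volume ≤ 1 := by
      intro τ hτ hint
      have hΘnn : ∀ x, 0 ≤ Θ (|u x| / τ) := by
        intro x
        have := hΘmono (Set.mem_Ici.2 (le_refl (0:ℝ)))
          (Set.mem_Ici.2 (by positivity : (0:ℝ) ≤ |u x| / τ)) (by positivity)
        rw [hΘ0] at this; exact this
      have step1 : ∫⁻ x, ENNReal.ofReal (Λ (|h x * u x| / (c * (M + Λ T * I) * τ))) ∂volume ≤
          ∫⁻ x, (ENNReal.ofReal ((1/R) * Θ (|u x| / τ)) +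
            ENNReal.ofReal ((Λ T / (M*R)) * |h x|)) ∂volume := by
        apply lintegral_mono_ae
        filter_upwards [hhb] with x hx
        rw [← ENNReal.ofReal_add (mul_nonneg hRinv (hΘnn x)) (mul_nonneg hcoef (abs_nonneg _))]
        apply ENNReal.ofReal_le_ofReal
        have hpt := pointwise_bound Λ Θ hΛmono hΘmono hΛ0 hΘ0 hΛconv c T M R I τ
          (|u x|) (|h x|) hc hT hMpos hRdef hInn hΛT hτ (abs_nonneg _) (abs_nonneg _)
          hx hdom
        calc Λ (|h x * u x| / (c * (M + Λ T * I) * τ))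
            = Λ (|h x| * |u x| / (c * M * R * τ)) := by rw [abs_mul, hCeq]
          _ ≤ (1/R) * Θ (|u x| / τ) + (Λ T / (M*R)) * |h x| := hpt
      have hmeas1 : AEMeasurable (fun x => ENNReal.ofReal ((1/R) * Θ (|u x| / τ))) volume := by
        apply (ENNReal.measurable_ofReal.comp
          ((hΘcont.measurable.comp (by fun_prop : Measurable
            (fun t : ℝ => |t| / τ))).const_mul (1/R))).comp_aemeasurable hu.aemeasurable
      have step2 : ∫⁻ x, (ENNReal.ofReal ((1/R) * Θ (|u x| / τ)) +
            ENNReal.ofReal ((Λ T / (M*R)) * |h x|)) ∂volume =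
          (∫⁻ x, ENNReal.ofReal ((1/R) * Θ (|u x| / τ)) ∂volume) +
          ∫⁻ x, ENNReal.ofReal ((Λ T / (M*R)) * |h x|) ∂volume :=
        lintegral_add_left' hmeas1 _
      have step3 : ∫⁻ x, ENNReal.ofReal ((1/R) * Θ (|u x| / τ)) ∂volume ≤
          ENNReal.ofReal (1/R) := by
        have he : ∀ x : EuclideanSpace ℝ (Fin N), ENNReal.ofReal ((1/R) * Θ (|u x| / τ)) =
            ENNReal.ofReal (1/R) * ENNReal.ofReal (Θ (|u x| / τ)) := fun x =>
          ENNReal.ofReal_mul hRinv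
        simp_rw [he]
        rw [lintegral_const_mul' _ _ ENNReal.ofReal_ne_top]
        calc ENNReal.ofReal (1/R) * ∫⁻ x, ENNReal.ofReal (Θ (|u x| / τ)) ∂volume ≤
            ENNReal.ofReal (1/R) * 1 := mul_le_mul_right hint _
          _ = ENNReal.ofReal (1/R) := mul_one _
      have step4 : ∫⁻ x, ENNReal.ofReal ((Λ T / (M*R)) * |h x|) ∂volume =
          ENNReal.ofReal (Λ T / (M*R)) * ENNReal.ofReal I := by
        have he : ∀ x : EuclideanSpace ℝ (Fin N), ENNReal.ofReal ((Λ T / (M*R)) * |h x|) =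
            ENNReal.ofReal (Λ T / (M*R)) * ENNReal.ofReal (|h x|) := fun x =>
          ENNReal.ofReal_mul hcoef
        simp_rw [he]
        rw [lintegral_const_mul' _ _ ENNReal.ofReal_ne_top]
        congr 1
        have he2 : ∀ x : EuclideanSpace ℝ (Fin N),
            ENNReal.ofReal (|h x|) = ‖h x‖ₑ := by
          intro x
          rw [← Real.norm_eq_abs, ofReal_norm_eq_enorm]
        simp_rw [he2]
        rw [← eLpNorm_one_eq_lintegral_enorm, hIdef, ENNReal.ofReal_toReal h1.2.ne]
      have harith : 1/R + (Λ T / (M*R)) * I = (M + Λ T * I) / (M * R) := by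
        field_simp
      calc ∫⁻ x, ENNReal.ofReal (Λ (|h x * u x| / (c * (M + Λ T * I) * τ))) ∂volume
          ≤ ∫⁻ x, (ENNReal.ofReal ((1/R) * Θ (|u x| / τ)) +
              ENNReal.ofReal ((Λ T / (M*R)) * |h x|)) ∂volume := step1
        _ = (∫⁻ x, ENNReal.ofReal ((1/R) * Θ (|u x| / τ)) ∂volume) +
            ∫⁻ x, ENNReal.ofReal ((Λ T / (M*R)) * |h x|) ∂volume := step2
        _ ≤ ENNReal.ofReal (1/R) + ENNReal.ofReal (Λ T / (M*R)) * ENNReal.ofReal I := by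
            rw [step4]; exact add_le_add_left step3 _
        _ = ENNReal.ofReal (1/R + (Λ T / (M*R)) * I) := by
            rw [← ENNReal.ofReal_mul hcoef,
              ← ENNReal.ofReal_add hRinv (mul_nonneg hcoef hInn)]
        _ ≤ 1 := by
            rw [← ENNReal.ofReal_one]
            apply ENNReal.ofReal_le_ofReal
            rw [harith, div_le_one (mul_pos hMpos hRpos), hMR]
    -- conclude via infimum manipulations
    have hSne : Set.Nonempty {τ : ℝ | 0 < τ ∧
        ∫⁻ x, ENNReal.ofReal (Θ (|u x| / τ)) ∂volume ≤ 1} := ⟨τ₀, hτ₀pos, hτ₀int⟩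
    have hbdd : BddBelow {τ : ℝ | 0 < τ ∧
        ∫⁻ x, ENNReal.ofReal (Λ (|h x * u x| / τ)) ∂volume ≤ 1} :=
      ⟨0, fun τ hτ => le_of_lt hτ.1⟩
    have hle : ∀ τ ∈ {τ : ℝ | 0 < τ ∧
        ∫⁻ x, ENNReal.ofReal (Θ (|u x| / τ)) ∂volume ≤ 1},
        luxNorm volume Λ (fun x => h x * u x) / (c * (M + Λ T * I)) ≤ τ := by
      intro τ hτmem
      rw [div_le_iff₀ hCpos]
      have hmem : c * (M + Λ T * I) * τ ∈ {τ : ℝ | 0 < τ ∧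
          ∫⁻ x, ENNReal.ofReal (Λ (|h x * u x| / τ)) ∂volume ≤ 1} :=
        ⟨mul_pos hCpos hτmem.1, key τ hτmem.1 hτmem.2⟩
      have h' : luxNorm volume Λ (fun x => h x * u x) ≤ c * (M + Λ T * I) * τ :=
        csInf_le hbdd hmem
      exact le_of_le_of_eq h' (mul_comm _ _)
    have hfin : luxNorm volume Λ (fun x => h x * u x) / (c * (M + Λ T * I)) ≤
        luxNorm volume Θ u := le_csInf hSne hle
    rw [div_le_iff₀ hCpos] at hfin
    exact le_of_le_of_eq hfin (mul_comm _ _)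
end

section
/- Let Λ be a differentiable Young function with s_Λ := sup_{t>0} tΛ'(t)/Λ(t) < N. Then there is a constant C > 0 such that t^{1/N} Λ_*⁻¹(t) ≤ C Λ⁻¹(t) for all t > 0, where Λ_* := Λ ∘ ℋ⁻¹ is the Sobolev conjugate of Λ with ℋ(t) = (∫₀ᵗ (τ/Λ(τ))^{1/(N-1)} dτ)^{(N-1)/N}. -/
/-- Key estimate: `Λ(s)^{1/N} (∫₀ˢ (τ/Λ(τ))^{1/(N-1)} dτ)^{(N-1)/N} ≤ C s`. -/
theorem key_bound (N : ℕ) (hN : 2 ≤ N)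
    (Λ : ℝ → ℝ) (sΛ : ℝ)
    (hdiff : ∀ t > 0, DifferentiableAt ℝ Λ t)
    (hΛ0 : Λ 0 = 0) (hΛpos : ∀ t > 0, 0 < Λ t)
    (hsup : ∀ t > 0, t * deriv Λ t / Λ t ≤ sΛ) (hsΛN : sΛ < N) :
    ∀ s > (0:ℝ),
      (Λ s) ^ ((1:ℝ)/N) *
        (∫ τ in (0:ℝ)..s, (τ / Λ τ) ^ ((1:ℝ)/((N:ℝ)-1))) ^ (((N:ℝ)-1)/N)
        ≤ (((N:ℝ)-1)/((N:ℝ)-sΛ)) ^ (((N:ℝ)-1)/(N:ℝ)) * s := by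
  intro s hs
  set n : ℝ := (N : ℝ) with hn_def
  have hn : (2:ℝ) ≤ n := by
    rw [hn_def]; exact_mod_cast hN
  have hn1 : (0:ℝ) < n - 1 := by linarith
  have hns : (0:ℝ) < n - sΛ := by linarith
  have hn0 : (0:ℝ) < n := by linarith
  set p : ℝ := (1 - sΛ) / (n - 1) with hp_def
  have hpe : p + 1 = (n - sΛ) / (n - 1) := by rw [hp_def]; field_simp; ring
  have hp1 : (0:ℝ) < p + 1 := by rw [hpe]; positivity
  have hpneg1 : (-1:ℝ) < p := by linarith
  have hΛs : 0 < Λ s := hΛpos s hs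
  -- the auxiliary antitone function
  set h : ℝ → ℝ := fun x => Λ x * x ^ (-sΛ) with hh_def
  have hderiv : ∀ x ∈ Set.Ioi (0:ℝ), HasDerivAt h
      (deriv Λ x * x ^ (-sΛ) + Λ x * (-sΛ * x ^ (-sΛ - 1))) x := by
    intro x hx
    exact ((hdiff x hx).hasDerivAt).mul
      (Real.hasDerivAt_rpow_const (Or.inl (ne_of_gt hx)))
  have hanti : AntitoneOn h (Set.Ioi 0) := by
    apply antitoneOn_of_deriv_nonpos (convex_Ioi 0)
    · intro x hx
      exact ((hderiv x hx).differentiableAt).continuousAt.continuousWithinAt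
    · rw [interior_Ioi]
      intro x hx
      exact ((hderiv x hx).differentiableAt).differentiableWithinAt
    · rw [interior_Ioi]
      intro x hx
      rw [(hderiv x hx).deriv]
      have hx0 : (0:ℝ) < x := hx
      have hΛx : 0 < Λ x := hΛpos x hx0
      have key : x * deriv Λ x ≤ sΛ * Λ x := by
        have := hsup x hx0
        rwa [div_le_iff₀ hΛx] at this
      have hxp : x ^ (-sΛ) = x ^ (-sΛ - 1) * x := by
        rw [← Real.rpow_add_one (ne_of_gt hx0)]; ring_nf
      have hxps : (0:ℝ) < x ^ (-sΛ - 1) := Real.rpow_pos_of_pos hx0 _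
      rw [hxp]
      have : deriv Λ x * (x ^ (-sΛ - 1) * x) + Λ x * (-sΛ * x ^ (-sΛ - 1))
          = x ^ (-sΛ - 1) * (x * deriv Λ x - sΛ * Λ x) := by ring
      rw [this]
      exact mul_nonpos_of_nonneg_of_nonpos hxps.le (by linarith)
  -- pointwise bound
  set A : ℝ := (s ^ sΛ / Λ s) ^ ((1:ℝ)/(n-1)) with hA_def
  have hApos : 0 < A := Real.rpow_pos_of_pos (by positivity) _
  have hpt : ∀ τ ∈ Set.Icc (0:ℝ) s,
      (τ / Λ τ) ^ ((1:ℝ)/(n-1)) ≤ A * τ ^ p := by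
    intro τ hτ
    rcases eq_or_lt_of_le hτ.1 with h0 | h0
    · rw [← h0]
      rw [zero_div, Real.zero_rpow (by positivity)]
      positivity
    · -- τ > 0
      have hΛτ : 0 < Λ τ := hΛpos τ h0
      have hmono := hanti h0 (Set.mem_Ioi.mpr hs) hτ.2
      -- h s ≤ h τ, i.e. Λ s * s^{-sΛ} ≤ Λ τ * τ^{-sΛ}
      have hds : 0 < Λ s * s ^ (-sΛ) := by positivity
      have hinv : τ ^ sΛ / Λ τ ≤ s ^ sΛ / Λ s := by
        have h1 : τ ^ sΛ / Λ τ = (Λ τ * τ ^ (-sΛ))⁻¹ := by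
          rw [mul_inv, Real.rpow_neg h0.le, inv_inv, div_eq_inv_mul, mul_comm]
        have h2 : s ^ sΛ / Λ s = (Λ s * s ^ (-sΛ))⁻¹ := by
          rw [mul_inv, Real.rpow_neg hs.le, inv_inv, div_eq_inv_mul, mul_comm]
        rw [h1, h2]
        exact inv_anti₀ hds hmono
      have hbase : τ / Λ τ ≤ τ ^ (1 - sΛ) * (s ^ sΛ / Λ s) := by
        have : τ / Λ τ = τ ^ (1 - sΛ) * (τ ^ sΛ / Λ τ) := by
          rw [← mul_div_assoc, ← Real.rpow_add h0]
          norm_num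
        rw [this]
        exact mul_le_mul_of_nonneg_left hinv (by positivity)
      calc (τ / Λ τ) ^ ((1:ℝ)/(n-1))
          ≤ (τ ^ (1 - sΛ) * (s ^ sΛ / Λ s)) ^ ((1:ℝ)/(n-1)) := by
            apply Real.rpow_le_rpow (by positivity) hbase (by positivity)
        _ = A * τ ^ p := by
            rw [Real.mul_rpow (by positivity) (by positivity),
              ← Real.rpow_mul h0.le, mul_comm ((τ:ℝ) ^ ((1 - sΛ) * (1/(n-1)))) _,
              mul_one_div]
  -- integrability
  have hg_int : IntervalIntegrable (fun τ => A * τ ^ p) MeasureTheory.volume 0 s :=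
    (intervalIntegral.intervalIntegrable_rpow' hpneg1).const_mul A
  have hf_meas : MeasureTheory.AEStronglyMeasurable
      (fun τ => (τ / Λ τ) ^ ((1:ℝ)/(n-1)))
      (MeasureTheory.volume.restrict (Set.Ioc 0 s)) := by
    apply ContinuousOn.aestronglyMeasurable _ measurableSet_Ioc
    intro τ hτ
    have hΛτ : 0 < Λ τ := hΛpos τ hτ.1
    exact ((continuousAt_id.div (hdiff τ hτ.1).continuousAt
      (ne_of_gt hΛτ)).rpow_const (Or.inr (by positivity))).continuousWithinAt
  have hf_int : IntervalIntegrable (fun τ => (τ / Λ τ) ^ ((1:ℝ)/(n-1)))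
      MeasureTheory.volume 0 s := by
    rw [intervalIntegrable_iff_integrableOn_Ioc_of_le hs.le]
    apply MeasureTheory.Integrable.mono
      ((intervalIntegrable_iff_integrableOn_Ioc_of_le hs.le).mp hg_int) hf_meas
    filter_upwards [MeasureTheory.ae_restrict_mem measurableSet_Ioc] with τ hτ
    have hΛτ : 0 < Λ τ := hΛpos τ hτ.1
    rw [Real.norm_eq_abs, Real.norm_eq_abs,
      abs_of_nonneg (Real.rpow_nonneg (div_nonneg hτ.1.le hΛτ.le) _),
      abs_of_nonneg (mul_nonneg hApos.le (Real.rpow_nonneg hτ.1.le _))]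
    exact hpt τ ⟨hτ.1.le, hτ.2⟩
  -- integral bound
  have hI_le : (∫ τ in (0:ℝ)..s, (τ / Λ τ) ^ ((1:ℝ)/(n-1)))
      ≤ A * (s ^ (p+1) / (p+1)) := by
    have := intervalIntegral.integral_mono_on hs.le hf_int hg_int hpt
    calc (∫ τ in (0:ℝ)..s, (τ / Λ τ) ^ ((1:ℝ)/(n-1)))
        ≤ ∫ τ in (0:ℝ)..s, A * τ ^ p := this
      _ = A * (s ^ (p+1) / (p+1)) := by
          rw [intervalIntegral.integral_const_mul, integral_rpow (Or.inl hpneg1),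
            Real.zero_rpow (ne_of_gt hp1), sub_zero]
  have hI_nonneg : (0:ℝ) ≤ ∫ τ in (0:ℝ)..s, (τ / Λ τ) ^ ((1:ℝ)/(n-1)) := by
    apply intervalIntegral.integral_nonneg hs.le
    intro τ hτ
    rcases eq_or_lt_of_le hτ.1 with h0 | h0
    · rw [← h0, zero_div, Real.zero_rpow (by positivity)]
    · have := hΛpos τ h0
      positivity
  -- final computation
  have hD_pos : 0 < A * (s ^ (p+1) / (p+1)) := by positivity
  have hstep : (Λ s) ^ ((1:ℝ)/n) *
      (∫ τ in (0:ℝ)..s, (τ / Λ τ) ^ ((1:ℝ)/(n-1))) ^ ((n-1)/n)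
      ≤ (Λ s) ^ ((1:ℝ)/n) * (A * (s ^ (p+1) / (p+1))) ^ ((n-1)/n) := by
    apply mul_le_mul_of_nonneg_left _ (by positivity)
    exact Real.rpow_le_rpow hI_nonneg hI_le (by positivity)
  refine le_trans hstep (le_of_eq ?_)
  -- now an equality of positive reals; compare logs
  have hLHS_pos : 0 < (Λ s) ^ ((1:ℝ)/n) * (A * (s ^ (p+1) / (p+1))) ^ ((n-1)/n) := by
    positivity
  have hRHS_pos : 0 < ((n-1)/(n-sΛ)) ^ ((n-1)/n) * s := by positivity
  apply Real.log_injOn_pos (Set.mem_Ioi.mpr hLHS_pos) (Set.mem_Ioi.mpr hRHS_pos)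
  have hC_pos : (0:ℝ) < (n-1)/(n-sΛ) := div_pos hn1 hns
  have hsp : (0:ℝ) < s ^ (p+1) := Real.rpow_pos_of_pos hs _
  have hssΛ : (0:ℝ) < s ^ sΛ := Real.rpow_pos_of_pos hs _
  rw [Real.log_mul (ne_of_gt (Real.rpow_pos_of_pos hΛs _))
        (ne_of_gt (Real.rpow_pos_of_pos hD_pos _)),
      Real.log_mul (ne_of_gt (Real.rpow_pos_of_pos hC_pos _)) (ne_of_gt hs),
      Real.log_rpow hΛs, Real.log_rpow hD_pos, Real.log_rpow hC_pos,
      Real.log_mul (ne_of_gt hApos) (ne_of_gt (div_pos hsp hp1)),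
      Real.log_div (ne_of_gt hsp) (ne_of_gt hp1),
      Real.log_rpow hs, hA_def,
      Real.log_rpow (div_pos hssΛ hΛs),
      Real.log_div (ne_of_gt hssΛ) (ne_of_gt hΛs),
      Real.log_rpow hs,
      Real.log_div (ne_of_gt hn1) (ne_of_gt hns),
      hpe, Real.log_div (ne_of_gt hns) (ne_of_gt hn1)]
  field_simp
  ring

/-- If `Λ` is a differentiable Young function with `s_Λ < N`, then
`t^{1/N} Λ_*⁻¹(t) ≤ C Λ⁻¹(t)` for all `t > 0`, where `Λ_* = Λ ∘ ℋ⁻¹` is the Sobolev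
conjugate, with `ℋ(s) = (∫₀ˢ (τ/Λ(τ))^{1/(N-1)} dτ)^{(N-1)/N}`; here we use that
`Λ_*⁻¹ = ℋ ∘ Λ⁻¹`. -/
theorem sobolev_conjugate_inverse_bound (N : ℕ) (hN : 2 ≤ N)
    (Λ Λinv : ℝ → ℝ) (sΛ : ℝ)
    (hdiff : ∀ t > 0, DifferentiableAt ℝ Λ t)
    (hΛ0 : Λ 0 = 0) (hΛpos : ∀ t > 0, 0 < Λ t)
    (hconv : ConvexOn ℝ (Set.Ici 0) Λ)
    (hlim0 : Filter.Tendsto (fun t => Λ t / t) (nhdsWithin 0 (Set.Ioi 0)) (nhds 0))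
    (hlimtop : Filter.Tendsto (fun t => Λ t / t) Filter.atTop Filter.atTop)
    (hsup : ∀ t > 0, t * deriv Λ t / Λ t ≤ sΛ) (hsΛN : sΛ < N)
    (hinv₁ : ∀ t ≥ 0, Λ (Λinv t) = t) (hinv₂ : ∀ t ≥ 0, Λinv (Λ t) = t)
    (hinvnn : ∀ t ≥ 0, 0 ≤ Λinv t) :
    ∃ C > (0:ℝ), ∀ t > (0:ℝ),
      t ^ ((1:ℝ)/N) *
        (∫ τ in (0:ℝ)..(Λinv t), (τ / Λ τ) ^ ((1:ℝ)/((N:ℝ)-1))) ^ (((N:ℝ)-1)/N)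
        ≤ C * Λinv t := by
  have hn1 : (0:ℝ) < (N:ℝ) - 1 := by
    have : (2:ℝ) ≤ (N:ℝ) := by exact_mod_cast hN
    linarith
  have hns : (0:ℝ) < (N:ℝ) - sΛ := by linarith
  refine ⟨(((N:ℝ)-1)/((N:ℝ)-sΛ)) ^ (((N:ℝ)-1)/(N:ℝ)),
    Real.rpow_pos_of_pos (div_pos hn1 hns) _, ?_⟩
  intro t ht
  set s := Λinv t with hs_def
  have hs : 0 < s := by
    rcases lt_or_eq_of_le (hinvnn t ht.le) with h | h
    · exact h
    · exfalso
      have h2 : Λ s = t := hinv₁ t ht.le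
      rw [hs_def, ← h, hΛ0] at h2
      linarith
  have hts : t = Λ s := (hinv₁ t ht.le).symm
  rw [hts]
  exact key_bound N hN Λ sΛ hdiff hΛ0 hΛpos hsup hsΛN s hs
end

section
/- Let Φ be a differentiable Young function with indices 1 < i_Φ ≤ s_Φ < ∞, let Φ̄ be its Young conjugate, and assume s_{Φ̄} ≤ i_Φ' := i_Φ/(i_Φ−1). Then for all t > 1, Φ⁻¹(Φ̄(t)) ≤ Φ⁻¹(Φ̄(1)) · t^{1/(i_Φ−1)}. -/
lemma ratio_le (f : ℝ → ℝ) (p a b : ℝ) (ha : 0 < a) (hab : a ≤ b)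
    (hf : ∀ x ∈ Set.Icc a b, DifferentiableAt ℝ f x)
    (hder : ∀ x ∈ Set.Icc a b, x * deriv f x ≤ p * f x) :
    f b * a ^ p ≤ f a * b ^ p := by
  have hb : 0 < b := ha.trans_le hab
  have hderiv : ∀ x ∈ Set.Icc a b,
      HasDerivAt (fun x => f x * x ^ (-p)) (deriv f x * x ^ (-p) + f x * (-p * x ^ (-p - 1))) x := by
    intro x hx
    have hx0 : 0 < x := lt_of_lt_of_le ha hx.1
    exact (hf x hx).hasDerivAt.mul (Real.hasDerivAt_rpow_const (Or.inl hx0.ne'))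
  have hanti : AntitoneOn (fun x => f x * x ^ (-p)) (Set.Icc a b) := by
    apply antitoneOn_of_deriv_nonpos (convex_Icc a b)
    · intro x hx
      exact (hderiv x hx).continuousAt.continuousWithinAt
    · intro x hx
      rw [interior_Icc] at hx
      exact (hderiv x (Set.mem_Icc_of_Ioo hx)).differentiableAt.differentiableWithinAt
    · intro x hx
      rw [interior_Icc] at hx
      have hx' : x ∈ Set.Icc a b := Set.mem_Icc_of_Ioo hx
      have hx0 : 0 < x := lt_of_lt_of_le ha hx'.1
      rw [(hderiv x hx').deriv]
      have e1 : x ^ (-p) = x * x ^ (-p - 1) := by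
        have e2 := Real.rpow_add hx0 1 (-p - 1)
        rw [Real.rpow_one] at e2
        rw [show (1:ℝ) + (-p - 1) = -p by ring] at e2
        exact e2
      have hp := Real.rpow_pos_of_pos hx0 (-p - 1)
      have h2 := mul_le_mul_of_nonneg_right (hder x hx') hp.le
      rw [e1]
      nlinarith [h2]
  have h3 := hanti (Set.mem_Icc.mpr ⟨le_rfl, hab⟩) (Set.mem_Icc.mpr ⟨hab, le_rfl⟩) hab
  simp only at h3
  rw [Real.rpow_neg ha.le, Real.rpow_neg hb.le, ← div_eq_mul_inv, ← div_eq_mul_inv] at h3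
  exact (div_le_div_iff₀ (Real.rpow_pos_of_pos hb p) (Real.rpow_pos_of_pos ha p)).mp h3

lemma ratio_ge (f : ℝ → ℝ) (q a b : ℝ) (ha : 0 < a) (hab : a ≤ b)
    (hf : ∀ x ∈ Set.Icc a b, DifferentiableAt ℝ f x)
    (hder : ∀ x ∈ Set.Icc a b, q * f x ≤ x * deriv f x) :
    f a * b ^ q ≤ f b * a ^ q := by
  have h := ratio_le (fun x => -f x) q a b ha hab (fun x hx => (hf x hx).neg) ?_
  · simp only [neg_mul] at h
    linarith
  · intro x hx
    have : deriv (fun x => -f x) x = -deriv f x := deriv.neg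
    rw [this]
    show x * -deriv f x ≤ q * -f x
    have := hder x hx
    linarith

/-- Let `Φ` be a differentiable Young function with indices `1 < i_Φ ≤ s_Φ < ∞`, `Φ̄` its
Young conjugate, and suppose `s_{Φ̄} ≤ i_Φ' = i_Φ/(i_Φ−1)`. Then for all `t > 1`,
`Φ⁻¹(Φ̄(t)) ≤ Φ⁻¹(Φ̄(1)) · t^{1/(i_Φ−1)}`. -/
theorem conj_inverse_power_bound (Φ Φb Φinv : ℝ → ℝ) (iΦ sΦ : ℝ)
    (hdiff : ∀ t > 0, DifferentiableAt ℝ Φ t)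
    (hbdiff : ∀ t > 0, DifferentiableAt ℝ Φb t)
    (hΦ0 : Φ 0 = 0) (hΦpos : ∀ t > 0, 0 < Φ t)
    (hconv : ConvexOn ℝ (Set.Ici 0) Φ)
    -- `Φb` is the Young (Legendre) conjugate of `Φ`
    (hconj : ∀ t ≥ (0:ℝ), Φb t = sSup {y : ℝ | ∃ s ≥ (0:ℝ), y = s * t - Φ s})
    -- `Φinv` is the inverse of `Φ` on `[0,∞)`
    (hinv₁ : ∀ t ≥ (0:ℝ), Φ (Φinv t) = t) (hinv₂ : ∀ t ≥ (0:ℝ), Φinv (Φ t) = t)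
    (hinvnn : ∀ t ≥ (0:ℝ), 0 ≤ Φinv t)
    (hiΦ : 1 < iΦ)
    (hind : ∀ t > 0, iΦ ≤ t * deriv Φ t / Φ t ∧ t * deriv Φ t / Φ t ≤ sΦ)
    (hconjind : ∀ t > 0, t * deriv Φb t / Φb t ≤ iΦ / (iΦ - 1)) :
    ∀ t > (1:ℝ), Φinv (Φb t) ≤ Φinv (Φb 1) * t ^ ((1:ℝ)/(iΦ - 1)) := by
  have hi1 : (0:ℝ) < iΦ - 1 := by linarith
  have hΦ1 : 0 < Φ 1 := hΦpos 1 one_pos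
  have hΦnn : ∀ s ≥ (0:ℝ), 0 ≤ Φ s := by
    intro s hs
    rcases hs.eq_or_lt with h | h
    · rw [← h, hΦ0]
    · exact (hΦpos s h).le
  -- lower bound on the derivative of Φ
  have hΦd : ∀ x > (0:ℝ), iΦ * Φ x ≤ x * deriv Φ x := fun x hx =>
    (le_div_iff₀ (hΦpos x hx)).mp (hind x hx).1
  -- growth: f a * b^iΦ ≤ f b * a^iΦ for 0 < a ≤ b
  have grow : ∀ a b : ℝ, 0 < a → a ≤ b → Φ a * b ^ iΦ ≤ Φ b * a ^ iΦ := by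
    intro a b ha hab
    refine ratio_ge Φ iΦ a b ha hab (fun x hx => hdiff x (lt_of_lt_of_le ha hx.1)) ?_
    exact fun x hx => hΦd x (lt_of_lt_of_le ha hx.1)
  -- Φ s ≤ Φ 1 * s^iΦ on (0,1]
  have gsmall : ∀ s : ℝ, 0 < s → s ≤ 1 → Φ s ≤ Φ 1 * s ^ iΦ := by
    intro s hs hs1
    have := grow s 1 hs hs1
    rwa [Real.one_rpow, mul_one] at this
  -- Φ 1 * s^iΦ ≤ Φ s for s ≥ 1
  have gbig : ∀ s : ℝ, 1 ≤ s → Φ 1 * s ^ iΦ ≤ Φ s := by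
    intro s hs
    have := grow 1 s one_pos hs
    rwa [Real.one_rpow, mul_one] at this
  -- the conjugate sets are bounded above
  have hbdd : ∀ u > (0:ℝ), BddAbove {y : ℝ | ∃ s ≥ (0:ℝ), y = s * u - Φ s} := by
    intro u hu
    set S : ℝ := max 1 ((2 * u / Φ 1) ^ ((1:ℝ)/(iΦ - 1))) with hS
    have hS1 : (1:ℝ) ≤ S := le_max_left _ _
    refine ⟨S * u, ?_⟩
    rintro y ⟨s, hs, rfl⟩
    by_cases hsS : s ≤ S
    · have h1 : 0 ≤ Φ s := hΦnn s hs
      have h2 : s * u ≤ S * u := mul_le_mul_of_nonneg_right hsS hu.le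
      linarith
    · push_neg at hsS
      have hs1 : (1:ℝ) ≤ s := hS1.trans hsS.le
      have hs0 : (0:ℝ) < s := by linarith
      have h2 : Φ 1 * s ^ iΦ ≤ Φ s := gbig s hs1
      have hc : (0:ℝ) < 2 * u / Φ 1 := by positivity
      have h3 : (2 * u / Φ 1) ^ ((1:ℝ)/(iΦ - 1)) ≤ s := (le_max_right _ _).trans hsS.le
      have h4 : 2 * u / Φ 1 ≤ s ^ (iΦ - 1) := by
        have := Real.rpow_le_rpow (Real.rpow_nonneg hc.le _) h3 hi1.le
        rwa [← Real.rpow_mul hc.le, one_div_mul_cancel hi1.ne', Real.rpow_one] at this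
      have h5 : s ^ (iΦ - 1) * s = s ^ iΦ := by
        have h5' := Real.rpow_add hs0 (iΦ - 1) 1
        rw [Real.rpow_one] at h5'
        rw [show iΦ - 1 + 1 = iΦ by ring] at h5'
        exact h5'.symm
      have h6 : 2 * u * s ≤ Φ s := by
        have h7 : (2 * u / Φ 1) * s ≤ s ^ (iΦ - 1) * s := mul_le_mul_of_nonneg_right h4 hs0.le
        calc 2 * u * s = Φ 1 * ((2 * u / Φ 1) * s) := by field_simp
          _ ≤ Φ 1 * (s ^ (iΦ - 1) * s) := mul_le_mul_of_nonneg_left h7 hΦ1.le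
          _ = Φ 1 * s ^ iΦ := by rw [h5]
          _ ≤ Φ s := h2
      nlinarith [mul_pos hs0 hu, mul_nonneg (by linarith : (0:ℝ) ≤ S) hu.le]
  -- a point where s - Φ s > 0
  obtain ⟨s₀, hs₀0, hs₀1, hs₀⟩ : ∃ s₀ : ℝ, 0 < s₀ ∧ s₀ ≤ 1 ∧ Φ s₀ ≤ s₀ / 2 := by
    refine ⟨min 1 ((1 / (2 * Φ 1)) ^ ((1:ℝ)/(iΦ - 1))), ?_, min_le_left _ _, ?_⟩
    · apply lt_min one_pos
      positivity
    · set s₀ : ℝ := min 1 ((1 / (2 * Φ 1)) ^ ((1:ℝ)/(iΦ - 1))) with hs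
      have h0 : 0 < s₀ := by apply lt_min one_pos; positivity
      have h1 : s₀ ≤ 1 := min_le_left _ _
      have hc : (0:ℝ) < 1 / (2 * Φ 1) := by positivity
      have h2 : s₀ ^ (iΦ - 1) ≤ 1 / (2 * Φ 1) := by
        have := Real.rpow_le_rpow h0.le (min_le_right 1 _) hi1.le
        rwa [← Real.rpow_mul hc.le, one_div_mul_cancel hi1.ne', Real.rpow_one] at this
      have h5 : s₀ ^ (iΦ - 1) * s₀ = s₀ ^ iΦ := by
        have h5' := Real.rpow_add h0 (iΦ - 1) 1
        rw [Real.rpow_one] at h5'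
        rw [show iΦ - 1 + 1 = iΦ by ring] at h5'
        exact h5'.symm
      calc Φ s₀ ≤ Φ 1 * s₀ ^ iΦ := gsmall s₀ h0 h1
        _ = Φ 1 * (s₀ ^ (iΦ - 1) * s₀) := by rw [h5]
        _ ≤ Φ 1 * (1 / (2 * Φ 1) * s₀) := by
            apply mul_le_mul_of_nonneg_left (mul_le_mul_of_nonneg_right h2 h0.le) hΦ1.le
        _ = s₀ / 2 := by field_simp
  -- positivity of Φb on [1, ∞)
  have hΦbpos : ∀ u ≥ (1:ℝ), 0 < Φb u := by
    intro u hu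
    have hu0 : (0:ℝ) < u := by linarith
    rw [hconj u hu0.le]
    have hmem : s₀ * u - Φ s₀ ∈ {y : ℝ | ∃ s ≥ (0:ℝ), y = s * u - Φ s} := ⟨s₀, hs₀0.le, rfl⟩
    have hle := le_csSup (hbdd u hu0) hmem
    have : s₀ ≤ s₀ * u := le_mul_of_one_le_right hs₀0.le hu
    linarith
  -- Φ is strictly monotone on (0, ∞)
  have hsm : StrictMonoOn Φ (Set.Ioi 0) := by
    apply strictMonoOn_of_deriv_pos (convex_Ioi 0)
    · intro x hx
      exact (hdiff x hx).continuousAt.continuousWithinAt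
    · intro x hx
      rw [interior_Ioi] at hx
      have hx0 : (0:ℝ) < x := hx
      have h1 := hΦd x hx0
      have h2 : 0 < iΦ * Φ x := mul_pos (by linarith) (hΦpos x hx0)
      nlinarith
  intro t ht
  have ht0 : (0:ℝ) < t := by linarith
  set q : ℝ := iΦ / (iΦ - 1) with hq
  set r : ℝ := (1:ℝ) / (iΦ - 1) with hr
  -- Φb t ≤ Φb 1 * t ^ q
  have hΦble : Φb t ≤ Φb 1 * t ^ q := by
    have := ratio_le Φb q 1 t one_pos ht.le
      (fun x hx => hbdiff x (lt_of_lt_of_le one_pos hx.1))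
      (fun x hx => (div_le_iff₀ (hΦbpos x hx.1)).mp (hconjind x (lt_of_lt_of_le one_pos hx.1)))
    rwa [Real.one_rpow, mul_one] at this
  set u : ℝ := Φb 1 with hu
  have hupos : 0 < u := hΦbpos 1 le_rfl
  set v : ℝ := Φinv u with hv
  have hvnn : 0 ≤ v := hinvnn u hupos.le
  have hΦv : Φ v = u := hinv₁ u hupos.le
  have hvpos : 0 < v := by
    rcases hvnn.eq_or_lt with h | h
    · exfalso; rw [← h, hΦ0] at hΦv; linarith
    · exact h
  set c : ℝ := t ^ r with hc
  have hc1 : (1:ℝ) < c := by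
    rw [hc]
    exact Real.one_lt_rpow_iff_of_pos ht0 |>.mpr (Or.inl ⟨ht, by positivity⟩)
  have hcv : v ≤ c * v := le_mul_of_one_le_left hvnn hc1.le
  -- Φ (c * v) ≥ c^iΦ * Φ v = t^q * u
  have hgrow := grow v (c * v) hvpos hcv
  have hcviΦ : (c * v) ^ iΦ = c ^ iΦ * v ^ iΦ :=
    Real.mul_rpow (by positivity) hvnn
  have hciΦ : c ^ iΦ = t ^ q := by
    rw [hc, ← Real.rpow_mul ht0.le]
    congr 1
    rw [hr, hq]
    field_simp
  have hviΦ : 0 < v ^ iΦ := Real.rpow_pos_of_pos hvpos iΦ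
  have hmain : u * t ^ q ≤ Φ (c * v) := by
    rw [hcviΦ, hciΦ, hΦv] at hgrow
    have := (mul_le_mul_iff_of_pos_right hviΦ).mp (by linarith [hgrow] : u * t ^ q * v ^ iΦ ≤ Φ (c * v) * v ^ iΦ)
    exact this
  -- conclude
  have hΦbt : Φb t ≤ Φ (c * v) := by
    have h1 : u * t ^ q = Φb 1 * t ^ q := rfl
    linarith [hΦble, hmain]
  set w : ℝ := Φinv (Φb t) with hw
  have hwnn : 0 ≤ w := hinvnn _ (hΦbpos t ht.le).le
  have hΦw : Φ w = Φb t := hinv₁ _ (hΦbpos t ht.le).le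
  have hwle : w ≤ c * v := by
    by_contra hcon
    push_neg at hcon
    have hcv0 : 0 < c * v := by positivity
    have := hsm (Set.mem_Ioi.mpr hcv0) (Set.mem_Ioi.mpr (hcv0.trans hcon)) hcon
    rw [hΦw] at this
    linarith
  calc w ≤ c * v := hwle
    _ = Φinv (Φb 1) * t ^ ((1:ℝ)/(iΦ - 1)) := by rw [mul_comm]
end

section
/- Let Φ be a C² Young function with φ = Φ' satisfying 0 < i_φ ≤ s_φ < ∞ and 1 < i_Φ ≤ s_Φ < N. Then there are constants such that for all |x| ≥ r > 0: C_r⁻¹ |x|^{(i_Φ−N)/(i_Φ−1)} ≤ ∫_{|x|}^∞ φ⁻¹(τ^{1−N}) dτ ≤ C_r |x|^{(s_Φ−N)/(s_Φ−1)}. -/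
open MeasureTheory

private lemma rpow_recip_cancel {x p : ℝ} (hx : 0 ≤ x) (hp : p ≠ 0) :
    (x ^ p) ^ (1/p) = x := by
  rw [← Real.rpow_mul hx, mul_one_div, div_self hp, Real.rpow_one]

private lemma rpow_rpow_div {τ : ℝ} (hτ : 0 < τ) (a b : ℝ) :
    (τ ^ a) ^ (1/b) = τ ^ (a/b) := by
  rw [← Real.rpow_mul hτ.le, mul_one_div]

/-- Decay estimates for the fundamental radial profile of the `Φ`-Laplacian: for a `C²`
Young function `Φ` with `φ = Φ'`, `0 < i_φ ≤ s_φ < ∞` and `1 < i_Φ ≤ s_Φ < N`, for every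
`r > 0` there is `C_r > 0` such that for all `s ≥ r`,
`C_r⁻¹ s^{(i_Φ−N)/(i_Φ−1)} ≤ ∫_s^∞ φ⁻¹(τ^{1−N}) dτ ≤ C_r s^{(s_Φ−N)/(s_Φ−1)}`. -/
theorem fundamental_profile_decay (N : ℕ) (hN : 2 ≤ N)
    (Φ φinv : ℝ → ℝ) (iφ sφ iΦ sΦ : ℝ)
    (hC2 : ContDiff ℝ 2 Φ)
    (hΦ0 : Φ 0 = 0) (hΦpos : ∀ t > 0, 0 < Φ t)
    (hconv : ConvexOn ℝ (Set.Ici 0) Φ)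
    (hφpos : ∀ t > 0, 0 < deriv Φ t)
    (hiφ : 0 < iφ) (hiφsφ : iφ ≤ sφ)
    (hlowφ : ∀ t > 0, iφ ≤ t * deriv (deriv Φ) t / deriv Φ t)
    (hhighφ : ∀ t > 0, t * deriv (deriv Φ) t / deriv Φ t ≤ sφ)
    (hiΦ : 1 < iΦ) (hiΦsΦ : iΦ ≤ sΦ) (hsΦN : sΦ < N)
    (hindΦ : ∀ t > 0, iΦ ≤ t * deriv Φ t / Φ t ∧ t * deriv Φ t / Φ t ≤ sΦ)
    (hinv₁ : ∀ t > 0, deriv Φ (φinv t) = t) (hinv₂ : ∀ t > 0, φinv (deriv Φ t) = t)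
    (hinvnn : ∀ t > 0, 0 ≤ φinv t) (hinvcont : ContinuousOn φinv (Set.Ioi 0)) :
    ∀ r > (0:ℝ), ∃ C > (0:ℝ), ∀ s ≥ r,
      C⁻¹ * s ^ ((iΦ - N)/(iΦ - 1)) ≤ (∫ τ in Set.Ioi s, φinv (τ ^ ((1:ℝ) - N))) ∧
      (∫ τ in Set.Ioi s, φinv (τ ^ ((1:ℝ) - N))) ≤ C * s ^ ((sΦ - N)/(sΦ - 1)) := by
  have hNR : (2:ℝ) ≤ (N:ℝ) := by exact_mod_cast hN
  have hΦ1 : 0 < Φ 1 := hΦpos 1 one_pos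
  have hφ1 : 0 < deriv Φ 1 := hφpos 1 one_pos
  have hiΦ1 : 0 < iΦ - 1 := by linarith
  have hsΦ1 : 0 < sΦ - 1 := by linarith
  have hsΦ0 : 0 < sΦ := by linarith
  have hiΦ0 : 0 < iΦ := by linarith
  have hA : 0 < sΦ * Φ 1 := mul_pos hsΦ0 hΦ1
  have hB : 0 < iΦ * Φ 1 := mul_pos hiΦ0 hΦ1
  have hφcont : Continuous (deriv Φ) := hC2.continuous_deriv (by norm_num)
  have hΦdiff : Differentiable ℝ Φ := hC2.differentiable (by norm_num)
  -- strict monotonicity of φ = deriv Φ on [0, ∞)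
  have hφmono : StrictMonoOn (deriv Φ) (Set.Ici 0) := by
    apply strictMonoOn_of_deriv_pos (convex_Ici 0) hφcont.continuousOn
    intro t ht
    rw [interior_Ici] at ht
    have htp : 0 < t := ht
    have h1 := hlowφ t htp
    have hphit := hφpos t htp
    rw [le_div_iff₀ hphit] at h1
    nlinarith [mul_pos hiφ hphit]
  -- derivatives of the ratio functions
  have hderivg : ∀ (p : ℝ), ∀ t : ℝ, 0 < t →
      HasDerivAt (fun x => Φ x * x ^ (-p))
        (deriv Φ t * t ^ (-p) + Φ t * (-p * t ^ (-p - 1))) t := by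
    intro p t ht
    exact (hΦdiff t).hasDerivAt.mul (Real.hasDerivAt_rpow_const (Or.inl ht.ne'))
  have hcontratio : ∀ (p : ℝ), ContinuousOn (fun x : ℝ => Φ x * x ^ (-p)) (Set.Ioi 0) := by
    intro p
    exact hC2.continuous.continuousOn.mul
      (ContinuousOn.rpow_const continuousOn_id (fun x hx => Or.inl (ne_of_gt hx)))
  have hkey : ∀ t : ℝ, 0 < t → t * t ^ (-(1:ℝ)) = 1 := by
    intro t ht
    rw [Real.rpow_neg_one]
    field_simp
  -- Φ t * t^(-iΦ) is monotone on (0, ∞)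
  have hmono_i : MonotoneOn (fun x : ℝ => Φ x * x ^ (-iΦ)) (Set.Ioi 0) := by
    apply monotoneOn_of_deriv_nonneg (convex_Ioi 0) (hcontratio iΦ)
    · rw [interior_Ioi]
      intro t ht
      exact ((hderivg iΦ t ht).differentiableAt).differentiableWithinAt
    · rw [interior_Ioi]
      intro t ht
      rw [(hderivg iΦ t ht).deriv]
      have hΦt := hΦpos t ht
      have hind := (hindΦ t ht).1
      rw [le_div_iff₀ hΦt] at hind
      have hQ : (0:ℝ) < t ^ (-iΦ - 1) := Real.rpow_pos_of_pos ht _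
      have key : t * t ^ (-iΦ - 1) = t ^ (-iΦ) := by
        have h := Real.rpow_add ht 1 (-iΦ - 1)
        rw [Real.rpow_one] at h
        rw [← h]; congr 1; ring
      rw [← key]
      nlinarith [mul_le_mul_of_nonneg_right hind hQ.le]
  -- Φ t * t^(-sΦ) is antitone on (0, ∞)
  have hmono_s : AntitoneOn (fun x : ℝ => Φ x * x ^ (-sΦ)) (Set.Ioi 0) := by
    apply antitoneOn_of_deriv_nonpos (convex_Ioi 0) (hcontratio sΦ)
    · rw [interior_Ioi]
      intro t ht
      exact ((hderivg sΦ t ht).differentiableAt).differentiableWithinAt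
    · rw [interior_Ioi]
      intro t ht
      rw [(hderivg sΦ t ht).deriv]
      have hΦt := hΦpos t ht
      have hind := (hindΦ t ht).2
      rw [div_le_iff₀ hΦt] at hind
      have hQ : (0:ℝ) < t ^ (-sΦ - 1) := Real.rpow_pos_of_pos ht _
      have key : t * t ^ (-sΦ - 1) = t ^ (-sΦ) := by
        have h := Real.rpow_add ht 1 (-sΦ - 1)
        rw [Real.rpow_one] at h
        rw [← h]; congr 1; ring
      rw [← key]
      nlinarith [mul_le_mul_of_nonneg_right hind hQ.le]
  -- Φ bounds on (0,1]
  have hΦub : ∀ t : ℝ, 0 < t → t ≤ 1 → Φ t ≤ Φ 1 * t ^ iΦ := by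
    intro t ht ht1
    have h := hmono_i (Set.mem_Ioi.2 ht) (Set.mem_Ioi.2 one_pos) ht1
    simp only [Real.one_rpow, mul_one] at h
    have hP : (0:ℝ) < t ^ iΦ := Real.rpow_pos_of_pos ht _
    have hneg : t ^ (-iΦ) = (t ^ iΦ)⁻¹ := by rw [Real.rpow_neg ht.le]
    rw [hneg] at h
    calc Φ t = Φ t * (t ^ iΦ)⁻¹ * t ^ iΦ := by field_simp
    _ ≤ Φ 1 * t ^ iΦ := mul_le_mul_of_nonneg_right h hP.le
  have hΦlb : ∀ t : ℝ, 0 < t → t ≤ 1 → Φ 1 * t ^ sΦ ≤ Φ t := by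
    intro t ht ht1
    have h := hmono_s (Set.mem_Ioi.2 ht) (Set.mem_Ioi.2 one_pos) ht1
    simp only [Real.one_rpow, mul_one] at h
    have hP : (0:ℝ) < t ^ sΦ := Real.rpow_pos_of_pos ht _
    have hneg : t ^ (-sΦ) = (t ^ sΦ)⁻¹ := by rw [Real.rpow_neg ht.le]
    rw [hneg] at h
    calc Φ 1 * t ^ sΦ ≤ Φ t * (t ^ sΦ)⁻¹ * t ^ sΦ := mul_le_mul_of_nonneg_right h hP.le
    _ = Φ t := by field_simp
  -- φ bounds on (0,1]
  have hφub : ∀ t : ℝ, 0 < t → t ≤ 1 → deriv Φ t ≤ (sΦ * Φ 1) * t ^ (iΦ - 1) := by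
    intro t ht ht1
    have hΦt := hΦpos t ht
    have hind := (hindΦ t ht).2
    rw [div_le_iff₀ hΦt] at hind
    have hub := hΦub t ht ht1
    have key : t ^ (iΦ - 1) * t = t ^ iΦ := by
      have h := Real.rpow_add ht (iΦ - 1) 1
      rw [Real.rpow_one] at h
      rw [← h]; congr 1; ring
    have : deriv Φ t * t ≤ ((sΦ * Φ 1) * t ^ (iΦ - 1)) * t := by
      rw [mul_assoc, key]
      nlinarith
    exact le_of_mul_le_mul_right this ht
  have hφlb : ∀ t : ℝ, 0 < t → t ≤ 1 → (iΦ * Φ 1) * t ^ (sΦ - 1) ≤ deriv Φ t := by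
    intro t ht ht1
    have hΦt := hΦpos t ht
    have hind := (hindΦ t ht).1
    rw [le_div_iff₀ hΦt] at hind
    have hlb := hΦlb t ht ht1
    have key : t ^ (sΦ - 1) * t = t ^ sΦ := by
      have h := Real.rpow_add ht (sΦ - 1) 1
      rw [Real.rpow_one] at h
      rw [← h]; congr 1; ring
    have : ((iΦ * Φ 1) * t ^ (sΦ - 1)) * t ≤ deriv Φ t * t := by
      rw [mul_assoc, key]
      nlinarith
    exact le_of_mul_le_mul_right this ht
  -- positivity of φinv
  have hinvpos : ∀ u : ℝ, 0 < u → 0 < φinv u := by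
    intro u hu
    rcases (hinvnn u hu).lt_or_eq with h | h
    · exact h
    · exfalso
      have h0 : deriv Φ 0 = u := by rw [h]; exact hinv₁ u hu
      set t : ℝ := min 1 ((u / (2 * (sΦ * Φ 1))) ^ (1/(iΦ - 1))) with htdef
      have hquot : (0:ℝ) < u / (2 * (sΦ * Φ 1)) := by positivity
      have htpos : 0 < t := lt_min one_pos (Real.rpow_pos_of_pos hquot _)
      have ht1 : t ≤ 1 := min_le_left _ _
      have hb := hφub t htpos ht1
      have hmlt : deriv Φ 0 < deriv Φ t :=
        hφmono (Set.mem_Ici.2 le_rfl) (Set.mem_Ici.2 htpos.le) htpos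
      have ht2 : t ^ (iΦ - 1) ≤ u / (2 * (sΦ * Φ 1)) := by
        have hle : t ≤ (u / (2 * (sΦ * Φ 1))) ^ (1/(iΦ-1)) := min_le_right _ _
        calc t ^ (iΦ - 1) ≤ ((u / (2 * (sΦ * Φ 1))) ^ (1/(iΦ-1))) ^ (iΦ-1) :=
          Real.rpow_le_rpow htpos.le hle hiΦ1.le
        _ = u / (2 * (sΦ * Φ 1)) := by
          rw [← Real.rpow_mul hquot.le, one_div, inv_mul_cancel₀ hiΦ1.ne', Real.rpow_one]
      have hfin : deriv Φ t ≤ u / 2 := by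
        calc deriv Φ t ≤ (sΦ * Φ 1) * t ^ (iΦ - 1) := hb
        _ ≤ (sΦ * Φ 1) * (u / (2 * (sΦ * Φ 1))) := mul_le_mul_of_nonneg_left ht2 hA.le
        _ = u / 2 := by field_simp
      rw [h0] at hmlt
      linarith
  -- introduce r
  intro r hr
  -- exponents
  set es : ℝ := (1 - (N:ℝ))/(sΦ - 1) with hes
  set ei : ℝ := (1 - (N:ℝ))/(iΦ - 1) with hei
  have hesneg : es < -1 := by
    rw [hes, div_lt_iff₀ hsΦ1]; linarith
  have heineg : ei < -1 := by
    rw [hei, div_lt_iff₀ hiΦ1]; linarith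
  have hes0 : es < 0 := by linarith
  have hei0 : ei < 0 := by linarith
  have h1N : (1:ℝ) - (N:ℝ) < 0 := by linarith
  -- auxiliary constants for pointwise bounds
  set T : ℝ := (deriv Φ 1) ^ ((1:ℝ)/(1 - (N:ℝ))) with hT
  have hTpos : 0 < T := Real.rpow_pos_of_pos hφ1 _
  have hrur : (0:ℝ) < r ^ ((1:ℝ) - (N:ℝ)) := Real.rpow_pos_of_pos hr _
  set M : ℝ := φinv (r ^ ((1:ℝ) - (N:ℝ))) with hM
  have hMpos : 0 < M := hinvpos _ hrur
  set m : ℝ := T ^ es with hm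
  have hmpos : 0 < m := Real.rpow_pos_of_pos hTpos _
  set Ku : ℝ := max ((iΦ * Φ 1) ^ (-(1/(sΦ - 1)))) (M / m) with hKu
  have hKupos : 0 < Ku := lt_max_of_lt_left (Real.rpow_pos_of_pos hB _)
  set cl : ℝ := min ((sΦ * Φ 1) ^ (-(1/(iΦ - 1)))) (r ^ (((N:ℝ) - 1)/(iΦ - 1))) with hcl
  have hclpos : 0 < cl := lt_min (Real.rpow_pos_of_pos hA _) (Real.rpow_pos_of_pos hr _)
  -- pointwise upper bound
  have hup : ∀ τ : ℝ, r ≤ τ → φinv (τ ^ ((1:ℝ) - N)) ≤ Ku * τ ^ es := by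
    intro τ hτ
    have hτpos : 0 < τ := lt_of_lt_of_le hr hτ
    have hupos : 0 < τ ^ ((1:ℝ) - N) := Real.rpow_pos_of_pos hτpos _
    have ht₀pos : 0 < φinv (τ ^ ((1:ℝ) - N)) := hinvpos _ hupos
    have hφt₀ : deriv Φ (φinv (τ ^ ((1:ℝ) - N))) = τ ^ ((1:ℝ) - N) := hinv₁ _ hupos
    have hτe : 0 < τ ^ es := Real.rpow_pos_of_pos hτpos _
    by_cases hcase : τ ^ ((1:ℝ) - N) ≤ deriv Φ 1
    · have ht₀1 : φinv (τ ^ ((1:ℝ) - N)) ≤ 1 := by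
        by_contra hgt
        push_neg at hgt
        have := hφmono (Set.mem_Ici.2 zero_le_one) (Set.mem_Ici.2 ht₀pos.le) hgt
        rw [hφt₀] at this
        linarith
      have hlb := hφlb _ ht₀pos ht₀1
      rw [hφt₀] at hlb
      have h1 : (φinv (τ ^ ((1:ℝ) - N))) ^ (sΦ - 1) ≤ τ ^ ((1:ℝ) - N) / (iΦ * Φ 1) := by
        rw [le_div_iff₀ hB]
        linarith
      have h2 : φinv (τ ^ ((1:ℝ) - N)) ≤ (τ ^ ((1:ℝ) - N) / (iΦ * Φ 1)) ^ (1/(sΦ - 1)) := by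
        calc φinv (τ ^ ((1:ℝ) - N))
            = ((φinv (τ ^ ((1:ℝ) - N))) ^ (sΦ - 1)) ^ (1/(sΦ - 1)) :=
              (rpow_recip_cancel ht₀pos.le hsΦ1.ne').symm
        _ ≤ (τ ^ ((1:ℝ) - N) / (iΦ * Φ 1)) ^ (1/(sΦ - 1)) :=
              Real.rpow_le_rpow (Real.rpow_nonneg ht₀pos.le _) h1 (by positivity)
      have h3 : (τ ^ ((1:ℝ) - N) / (iΦ * Φ 1)) ^ (1/(sΦ - 1))
          = (iΦ * Φ 1) ^ (-(1/(sΦ - 1))) * τ ^ es := by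
        rw [Real.div_rpow hupos.le hB.le, rpow_rpow_div hτpos, Real.rpow_neg hB.le]
        rw [hes]
        ring
      rw [h3] at h2
      calc φinv (τ ^ ((1:ℝ) - N)) ≤ (iΦ * Φ 1) ^ (-(1/(sΦ - 1))) * τ ^ es := h2
      _ ≤ Ku * τ ^ es := mul_le_mul_of_nonneg_right (le_max_left _ _) hτe.le
    · push_neg at hcase
      have hτT : τ < T := by
        have h1 : (τ ^ ((1:ℝ) - N)) ^ ((1:ℝ)/(1 - (N:ℝ))) < T :=
          Real.rpow_lt_rpow_of_neg hφ1 hcase (by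
            rw [one_div]
            exact inv_neg''.2 h1N)
        rwa [rpow_rpow_div hτpos, div_self (ne_of_lt h1N), Real.rpow_one] at h1
      have ht₀M : φinv (τ ^ ((1:ℝ) - N)) ≤ M := by
        by_contra hgt
        push_neg at hgt
        have hmono := hφmono (Set.mem_Ici.2 hMpos.le) (Set.mem_Ici.2 ht₀pos.le) hgt
        rw [hφt₀, hM, hinv₁ _ hrur] at hmono
        have : τ ^ ((1:ℝ) - (N:ℝ)) ≤ r ^ ((1:ℝ) - (N:ℝ)) :=
          Real.rpow_le_rpow_of_nonpos hr hτ h1N.le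
        linarith
      have hmτ : m ≤ τ ^ es := by
        rw [hm]
        exact Real.rpow_le_rpow_of_nonpos hτpos hτT.le hes0.le
      calc φinv (τ ^ ((1:ℝ) - N)) ≤ M := ht₀M
      _ = (M / m) * m := by field_simp
      _ ≤ Ku * τ ^ es := mul_le_mul (le_max_right _ _) hmτ hmpos.le hKupos.le
  -- pointwise lower bound
  have hlow : ∀ τ : ℝ, r ≤ τ → cl * τ ^ ei ≤ φinv (τ ^ ((1:ℝ) - N)) := by
    intro τ hτ
    have hτpos : 0 < τ := lt_of_lt_of_le hr hτ
    have hupos : 0 < τ ^ ((1:ℝ) - N) := Real.rpow_pos_of_pos hτpos _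
    have ht₀pos : 0 < φinv (τ ^ ((1:ℝ) - N)) := hinvpos _ hupos
    have hφt₀ : deriv Φ (φinv (τ ^ ((1:ℝ) - N))) = τ ^ ((1:ℝ) - N) := hinv₁ _ hupos
    by_cases hcase : τ ^ ((1:ℝ) - N) ≤ deriv Φ 1
    · have ht₀1 : φinv (τ ^ ((1:ℝ) - N)) ≤ 1 := by
        by_contra hgt
        push_neg at hgt
        have := hφmono (Set.mem_Ici.2 zero_le_one) (Set.mem_Ici.2 ht₀pos.le) hgt
        rw [hφt₀] at this
        linarith
      have hub := hφub _ ht₀pos ht₀1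
      rw [hφt₀] at hub
      have h1 : τ ^ ((1:ℝ) - N) / (sΦ * Φ 1) ≤ (φinv (τ ^ ((1:ℝ) - N))) ^ (iΦ - 1) := by
        rw [div_le_iff₀ hA]
        linarith
      have h2 : (τ ^ ((1:ℝ) - N) / (sΦ * Φ 1)) ^ (1/(iΦ - 1)) ≤ φinv (τ ^ ((1:ℝ) - N)) := by
        calc (τ ^ ((1:ℝ) - N) / (sΦ * Φ 1)) ^ (1/(iΦ - 1))
            ≤ ((φinv (τ ^ ((1:ℝ) - N))) ^ (iΦ - 1)) ^ (1/(iΦ - 1)) :=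
              Real.rpow_le_rpow (by positivity) h1 (by positivity)
        _ = φinv (τ ^ ((1:ℝ) - N)) := rpow_recip_cancel ht₀pos.le hiΦ1.ne'
      have h3 : (τ ^ ((1:ℝ) - N) / (sΦ * Φ 1)) ^ (1/(iΦ - 1))
          = (sΦ * Φ 1) ^ (-(1/(iΦ - 1))) * τ ^ ei := by
        rw [Real.div_rpow hupos.le hA.le, rpow_rpow_div hτpos, Real.rpow_neg hA.le]
        rw [hei]
        ring
      rw [h3] at h2
      have hτe : 0 < τ ^ ei := Real.rpow_pos_of_pos hτpos _
      calc cl * τ ^ ei ≤ (sΦ * Φ 1) ^ (-(1/(iΦ - 1))) * τ ^ ei :=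
        mul_le_mul_of_nonneg_right (min_le_left _ _) hτe.le
      _ ≤ φinv (τ ^ ((1:ℝ) - N)) := h2
    · push_neg at hcase
      have ht₀1 : 1 ≤ φinv (τ ^ ((1:ℝ) - N)) := by
        by_contra hlt
        push_neg at hlt
        have := hφmono.monotoneOn (Set.mem_Ici.2 ht₀pos.le) (Set.mem_Ici.2 zero_le_one) hlt.le
        rw [hφt₀] at this
        linarith
      have hτr : τ ^ ei ≤ r ^ ei :=
        Real.rpow_le_rpow_of_nonpos hr hτ hei0.le
      have hcl2 : cl ≤ r ^ (((N:ℝ) - 1)/(iΦ - 1)) := min_le_right _ _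
      have hprod : r ^ (((N:ℝ) - 1)/(iΦ - 1)) * r ^ ei = 1 := by
        rw [hei, ← Real.rpow_add hr]
        have : ((N:ℝ) - 1)/(iΦ - 1) + (1 - (N:ℝ))/(iΦ - 1) = 0 := by
          rw [← add_div]
          ring_nf
        rw [this, Real.rpow_zero]
      have hrei : 0 < r ^ ei := Real.rpow_pos_of_pos hr _
      have s1 : cl * τ ^ ei ≤ r ^ (((N:ℝ) - 1)/(iΦ - 1)) * τ ^ ei :=
        mul_le_mul_of_nonneg_right hcl2 (Real.rpow_pos_of_pos hτpos _).le
      have s2 : r ^ (((N:ℝ) - 1)/(iΦ - 1)) * τ ^ ei ≤ r ^ (((N:ℝ) - 1)/(iΦ - 1)) * r ^ ei :=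
        mul_le_mul_of_nonneg_left hτr (Real.rpow_pos_of_pos hr _).le
      rw [hprod] at s2
      linarith
  -- constants for the integral
  set βs : ℝ := -(es + 1) with hβs
  set βi : ℝ := -(ei + 1) with hβi
  have hβspos : 0 < βs := by rw [hβs]; linarith
  have hβipos : 0 < βi := by rw [hβi]; linarith
  set Cup : ℝ := Ku / βs with hCup
  set Clow : ℝ := cl / βi with hClow
  have hCuppos : 0 < Cup := div_pos hKupos hβspos
  have hClowpos : 0 < Clow := div_pos hclpos hβipos
  refine ⟨max Cup Clow⁻¹, lt_max_of_lt_left hCuppos, ?_⟩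
  intro s hs
  have hspos : 0 < s := lt_of_lt_of_le hr hs
  -- measurability
  have hmeas : AEStronglyMeasurable (fun τ : ℝ => φinv (τ ^ ((1:ℝ) - N)))
      (volume.restrict (Set.Ioi s)) := by
    apply ContinuousOn.aestronglyMeasurable _ measurableSet_Ioi
    apply hinvcont.comp
    · exact ContinuousOn.rpow_const continuousOn_id
        (fun x hx => Or.inl (ne_of_gt (lt_trans hspos hx)))
    · intro x hx
      exact Set.mem_Ioi.2 (Real.rpow_pos_of_pos (lt_trans hspos hx) _)
  -- integrable majorant
  have hgint : IntegrableOn (fun τ : ℝ => Ku * τ ^ es) (Set.Ioi s) :=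
    (integrableOn_Ioi_rpow_of_lt hesneg hspos).const_mul Ku
  have hgint' : IntegrableOn (fun τ : ℝ => cl * τ ^ ei) (Set.Ioi s) :=
    (integrableOn_Ioi_rpow_of_lt heineg hspos).const_mul cl
  have hint : IntegrableOn (fun τ : ℝ => φinv (τ ^ ((1:ℝ) - N))) (Set.Ioi s) := by
    apply Integrable.mono' hgint hmeas
    filter_upwards [ae_restrict_mem measurableSet_Ioi] with τ hτ
    have hτr : r ≤ τ := hs.trans (le_of_lt hτ)
    have hτpos : 0 < τ := lt_of_lt_of_le hr hτr
    rw [Real.norm_eq_abs, abs_of_nonneg (hinvnn _ (Real.rpow_pos_of_pos hτpos _))]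
    exact hup τ hτr
  -- integral values
  have hvals : (∫ τ in Set.Ioi s, Ku * τ ^ es) = Ku * (s ^ (es + 1) / βs) := by
    rw [MeasureTheory.integral_const_mul, integral_Ioi_rpow_of_lt hesneg hspos]
    rw [hβs]
    congr 1
    rw [div_neg, neg_div]
  have hvals' : (∫ τ in Set.Ioi s, cl * τ ^ ei) = cl * (s ^ (ei + 1) / βi) := by
    rw [MeasureTheory.integral_const_mul, integral_Ioi_rpow_of_lt heineg hspos]
    rw [hβi]
    congr 1
    rw [div_neg, neg_div]
  have hexps : es + 1 = (sΦ - N)/(sΦ - 1) := by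
    rw [hes]
    field_simp
    ring
  have hexpi : ei + 1 = (iΦ - N)/(iΦ - 1) := by
    rw [hei]
    field_simp
    ring
  have hspow_s : 0 < s ^ ((sΦ - (N:ℝ))/(sΦ - 1)) := Real.rpow_pos_of_pos hspos _
  have hspow_i : 0 < s ^ ((iΦ - (N:ℝ))/(iΦ - 1)) := Real.rpow_pos_of_pos hspos _
  constructor
  · -- lower bound
    have hmon : (∫ τ in Set.Ioi s, cl * τ ^ ei) ≤ ∫ τ in Set.Ioi s, φinv (τ ^ ((1:ℝ) - N)) := by
      apply setIntegral_mono_on hgint' hint measurableSet_Ioi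
      intro τ hτ
      exact hlow τ (hs.trans (le_of_lt hτ))
    rw [hvals', hexpi] at hmon
    have hCinv : (max Cup Clow⁻¹)⁻¹ ≤ Clow := by
      have h1 : Clow⁻¹ ≤ max Cup Clow⁻¹ := le_max_right _ _
      have h2 := inv_anti₀ (inv_pos.2 hClowpos) h1
      rwa [inv_inv] at h2
    calc (max Cup Clow⁻¹)⁻¹ * s ^ ((iΦ - (N:ℝ))/(iΦ - 1))
        ≤ Clow * s ^ ((iΦ - (N:ℝ))/(iΦ - 1)) :=
          mul_le_mul_of_nonneg_right hCinv hspow_i.le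
    _ = cl * (s ^ ((iΦ - (N:ℝ))/(iΦ - 1)) / βi) := by rw [hClow]; ring
    _ ≤ ∫ τ in Set.Ioi s, φinv (τ ^ ((1:ℝ) - N)) := hmon
  · -- upper bound
    have hmon : (∫ τ in Set.Ioi s, φinv (τ ^ ((1:ℝ) - N))) ≤ ∫ τ in Set.Ioi s, Ku * τ ^ es := by
      apply setIntegral_mono_on hint hgint measurableSet_Ioi
      intro τ hτ
      exact hup τ (hs.trans (le_of_lt hτ))
    rw [hvals, hexps] at hmon
    calc (∫ τ in Set.Ioi s, φinv (τ ^ ((1:ℝ) - N)))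
        ≤ Ku * (s ^ ((sΦ - (N:ℝ))/(sΦ - 1)) / βs) := hmon
    _ = Cup * s ^ ((sΦ - (N:ℝ))/(sΦ - 1)) := by rw [hCup]; ring
    _ ≤ max Cup Clow⁻¹ * s ^ ((sΦ - (N:ℝ))/(sΦ - 1)) :=
          mul_le_mul_of_nonneg_right (le_max_left _ _) hspow_s.le
end
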